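/- arXiv:0802.2107 — 9 statements merged into one kernel-verified Lean document; each statement's English description precedes it below -/
import Mathlib

section
/- Q(r) > 0 for every nonzero r ∈ LC⁺ if and only if there exists a real 4×4 matrix Λ with Λᵀ η Λ = η such that D = Λᵀ B Λ is diagonal and satisfies D₀₀ + Dᵢᵢ > 0 for each i ∈ {1, 2, 3}. (Equivalently: B is diagonalizable by a Lorentz transformation to the form diag(B₀, −B₁, −B₂, −B₃) with B₀ > B₁, B₂, B₃.) -/
open Matrix

/-- The forward lightcone in ℝ⁴. -/
def LCplus : Set (Fin 4 → ℝ) :=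
  {r | 0 ≤ r 0 ∧ (r 0) ^ 2 = (r 1) ^ 2 + (r 2) ^ 2 + (r 3) ^ 2}

/-- Minkowski metric diag(1, −1, −1, −1). -/
def eta : Matrix (Fin 4) (Fin 4) ℝ := Matrix.diagonal ![1, -1, -1, -1]

/-- The quadratic form associated to a 4×4 matrix. -/
def Q (B : Matrix (Fin 4) (Fin 4) ℝ) (r : Fin 4 → ℝ) : ℝ := r ⬝ᵥ B.mulVec r

set_option maxHeartbeats 1600000

section Helpers

lemma eta_mul_eta : eta * eta = 1 := by
  ext i j
  rw [Matrix.mul_apply, Fin.sum_univ_four]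
  fin_cases i <;> fin_cases j <;> simp [eta, Matrix.diagonal, Matrix.one_apply]

lemma eta_symm : eta.IsSymm := by
  unfold Matrix.IsSymm
  simp [eta, Matrix.diagonal_transpose]

lemma Q_mulVec (A B : Matrix (Fin 4) (Fin 4) ℝ) (u : Fin 4 → ℝ) :
    Q B (A.mulVec u) = u ⬝ᵥ ((Aᵀ * B * A).mulVec u) := by
  have h1 : A.mulVec u ⬝ᵥ (B.mulVec (A.mulVec u)) = u ⬝ᵥ (Aᵀ.mulVec (B.mulVec (A.mulVec u))) := by
    rw [Matrix.dotProduct_mulVec u Aᵀ, ← Matrix.mulVec_transpose, transpose_transpose]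
  simp only [Q, ← mulVec_mulVec, Matrix.mul_assoc] at *
  exact h1

lemma Q_eta (r : Fin 4 → ℝ) :
    Q eta r = (r 0)^2 - (r 1)^2 - (r 2)^2 - (r 3)^2 := by
  simp [Q, eta, dotProduct, Matrix.mulVec_diagonal, Fin.sum_univ_four]
  ring

lemma dp_expand (A : Matrix (Fin 4) (Fin 4) ℝ) (x y : Fin 4 → ℝ) :
    x ⬝ᵥ A.mulVec y = ∑ i, ∑ j, A i j * x i * y j := by
  simp only [dotProduct, Matrix.mulVec, Finset.mul_sum]
  exact Finset.sum_congr rfl fun i _ => Finset.sum_congr rfl fun j _ => by ring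

lemma contQ (A : Matrix (Fin 4) (Fin 4) ℝ) : Continuous (Q A) := by
  have : Q A = fun r => ∑ i, ∑ j, A i j * r i * r j := by
    funext r; exact dp_expand A r r
  rw [this]
  exact continuous_finset_sum _ fun i _ => continuous_finset_sum _ fun j _ =>
    (continuous_const.mul (continuous_apply i)).mul (continuous_apply j)

lemma Q_smul (A : Matrix (Fin 4) (Fin 4) ℝ) (t : ℝ) (r : Fin 4 → ℝ) :
    Q A (t • r) = t ^ 2 * Q A r := by
  unfold Q
  rw [dp_expand, dp_expand, Finset.mul_sum]
  refine Finset.sum_congr rfl fun i _ => ?_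
  rw [Finset.mul_sum]
  refine Finset.sum_congr rfl fun j _ => ?_
  simp only [Pi.smul_apply, smul_eq_mul]
  ring

lemma Q_neg (A : Matrix (Fin 4) (Fin 4) ℝ) (r : Fin 4 → ℝ) : Q A (-r) = Q A r := by
  have : (-r) = (-1 : ℝ) • r := by funext k; simp
  rw [this, Q_smul]
  norm_num

lemma dp_symm_swap (A : Matrix (Fin 4) (Fin 4) ℝ) (hA : A.IsSymm) (x y : Fin 4 → ℝ) :
    x ⬝ᵥ A.mulVec y = y ⬝ᵥ A.mulVec x := by
  rw [Matrix.dotProduct_mulVec, ← Matrix.mulVec_transpose, hA.eq, dotProduct_comm]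

lemma conj_entry {n : ℕ} (P X : Matrix (Fin n) (Fin n) ℝ) (a b : Fin n) :
    (Pᵀ * X * P) a b = ∑ l, (∑ k, P k a * X k l) * P l b := by
  rw [Matrix.mul_apply]
  refine Finset.sum_congr rfl fun l _ => ?_
  rw [Matrix.mul_apply]
  congr 1

lemma conj_symm (P B : Matrix (Fin 4) (Fin 4) ℝ) (hB : B.IsSymm) : (Pᵀ * B * P).IsSymm := by
  unfold Matrix.IsSymm
  rw [Matrix.transpose_mul, Matrix.transpose_mul, Matrix.transpose_transpose, hB.eq,
    Matrix.mul_assoc]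

/-- Positivity on the null cone from positivity on the forward cone. -/
lemma pos_null (B : Matrix (Fin 4) (Fin 4) ℝ)
    (h : ∀ r ∈ LCplus, r ≠ 0 → 0 < Q B r) :
    ∀ r : Fin 4 → ℝ, Q eta r = 0 → r ≠ 0 → 0 < Q B r := by
  intro r hr hr0
  rw [Q_eta] at hr
  by_cases hsgn : 0 ≤ r 0
  · exact h r ⟨hsgn, by linarith⟩ hr0
  · have h1 : (-r) ∈ LCplus := by
      constructor
      · simp; linarith [not_le.mp hsgn]
      · simp; linarith
    have h2 : (-r) ≠ 0 := fun hc => hr0 (by simpa using congrArg Neg.neg hc)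
    have := h (-r) h1 h2
    rwa [Q_neg] at this
end Helpers

section Derivatives

noncomputable def qderiv (A : Matrix (Fin 4) (Fin 4) ℝ) (r : Fin 4 → ℝ) : (Fin 4 → ℝ) →L[ℝ] ℝ :=
  ∑ i, ∑ j, A i j • (r i • (ContinuousLinearMap.proj j : (Fin 4 → ℝ) →L[ℝ] ℝ)
    + r j • (ContinuousLinearMap.proj i : (Fin 4 → ℝ) →L[ℝ] ℝ))

lemma hasDeriv_qf (A : Matrix (Fin 4) (Fin 4) ℝ) (r : Fin 4 → ℝ) :
    HasStrictFDerivAt (Q A) (qderiv A r) r := by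
  have h : (Q A) = fun r => ∑ i, ∑ j, A i j * (r i * r j) := by
    funext r
    rw [Q, dp_expand]
    exact Finset.sum_congr rfl fun i _ => Finset.sum_congr rfl fun j _ => by ring
  rw [h]
  apply HasStrictFDerivAt.fun_sum
  intro i _
  apply HasStrictFDerivAt.fun_sum
  intro j _
  exact (((ContinuousLinearMap.proj i : (Fin 4 → ℝ) →L[ℝ] ℝ).hasStrictFDerivAt (x := r)).mul
    ((ContinuousLinearMap.proj j : (Fin 4 → ℝ) →L[ℝ] ℝ).hasStrictFDerivAt)).const_mul (A i j)

lemma qderiv_apply (A : Matrix (Fin 4) (Fin 4) ℝ) (r v : Fin 4 → ℝ) :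
    qderiv A r v = r ⬝ᵥ A.mulVec v + v ⬝ᵥ A.mulVec r := by
  rw [dp_expand, dp_expand, ← Finset.sum_add_distrib]
  simp only [qderiv, ContinuousLinearMap.sum_apply, ContinuousLinearMap.smul_apply,
    ContinuousLinearMap.add_apply, ContinuousLinearMap.proj_apply, smul_eq_mul]
  refine Finset.sum_congr rfl fun i _ => ?_
  rw [← Finset.sum_add_distrib]
  exact Finset.sum_congr rfl fun j _ => by ring

end Derivatives

section MinExistence

lemma exists_min (B : Matrix (Fin 4) (Fin 4) ℝ)
    (hpos : ∀ r : Fin 4 → ℝ, Q eta r = 0 → r ≠ 0 → 0 < Q B r) :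
    ∃ v : Fin 4 → ℝ, Q eta v = 1 ∧ 1 ≤ v 0 ∧
      ∀ r : Fin 4 → ℝ, Q eta r = 1 → 1 ≤ r 0 → Q B v ≤ Q B r := by
  classical
  set K : Set (Fin 4 → ℝ) := {u | ‖u‖ = 1 ∧ 0 ≤ Q eta u} with hK
  have hKcompact : IsCompact K := by
    apply Metric.isCompact_of_isClosed_isBounded
    · exact (isClosed_eq continuous_norm continuous_const).inter
        (isClosed_le continuous_const (contQ eta))
    · apply Bornology.IsBounded.subset (Metric.isBounded_closedBall (x := (0 : Fin 4 → ℝ)) (r := 1))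
      intro u hu
      simp [Metric.mem_closedBall, dist_zero_right, hu.1.le]
  set K0 : Set (Fin 4 → ℝ) := {u | ‖u‖ = 1 ∧ Q eta u = 0} with hK0
  have hK0compact : IsCompact K0 := by
    apply Metric.isCompact_of_isClosed_isBounded
    · exact (isClosed_eq continuous_norm continuous_const).inter
        (isClosed_eq (contQ eta) continuous_const)
    · apply Bornology.IsBounded.subset (Metric.isBounded_closedBall (x := (0 : Fin 4 → ℝ)) (r := 1))
      intro u hu
      simp [Metric.mem_closedBall, dist_zero_right, hu.1.le]
  have hK0ne : K0.Nonempty := by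
    have hu0 : (![1,1,0,0] : Fin 4 → ℝ) ≠ 0 := by
      intro h
      have := congrFun h 0
      norm_num at this
    have hn : 0 < ‖(![1,1,0,0] : Fin 4 → ℝ)‖ := norm_pos_iff.mpr hu0
    refine ⟨‖(![1,1,0,0] : Fin 4 → ℝ)‖⁻¹ • ![1,1,0,0], ?_, ?_⟩
    · rw [norm_smul]
      simp [abs_of_pos (inv_pos.mpr hn), inv_mul_cancel₀ hn.ne']
    · rw [Q_smul]
      rw [show Q eta ![1,1,0,0] = 0 from by rw [Q_eta]; simp]
      ring
  obtain ⟨u0, hu0K, hu0min⟩ := hK0compact.exists_isMinOn hK0ne (contQ B).continuousOn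
  set c := Q B u0 with hc
  have hcpos : 0 < c := by
    apply hpos u0 hu0K.2
    intro h
    have h1 := hu0K.1
    rw [h] at h1
    simp at h1
  have hdelta : ∃ δ > 0, ∀ u ∈ K, Q eta u < δ → c/2 < Q B u := by
    set T : Set (Fin 4 → ℝ) := {u ∈ K | Q B u ≤ c/2} with hT
    have hTcompact : IsCompact T := by
      apply hKcompact.of_isClosed_subset
      · exact (Metric.isCompact_iff_isClosed_bounded.mp hKcompact).1.inter
          (isClosed_le (contQ B) continuous_const)
      · intro u hu; exact hu.1
    rcases T.eq_empty_or_nonempty with hTe | hTne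
    · refine ⟨1, one_pos, fun u hu hlt => ?_⟩
      by_contra hle
      push_neg at hle
      exact (Set.eq_empty_iff_forall_notMem.mp hTe u) ⟨hu, hle⟩
    · obtain ⟨t0, ht0T, ht0min⟩ := hTcompact.exists_isMinOn hTne (contQ eta).continuousOn
      refine ⟨Q eta t0, ?_, fun u hu hlt => ?_⟩
      · rcases lt_or_eq_of_le ht0T.1.2 with h | h
        · exact h
        · exfalso
          have ht0K0 : t0 ∈ K0 := ⟨ht0T.1.1, h.symm⟩
          have hle := ht0T.2
          have : c ≤ Q B t0 := hu0min ht0K0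
          linarith
      · by_contra hle
        push_neg at hle
        have huT : u ∈ T := ⟨hu, hle⟩
        have := ht0min huT
        exact absurd hlt (not_lt.mpr this)
  obtain ⟨δ, hδpos, hδ⟩ := hdelta
  clear_value c
  set e0 : Fin 4 → ℝ := ![1,0,0,0] with he0
  have he0H : Q eta e0 = 1 ∧ 1 ≤ e0 0 := by
    constructor
    · rw [Q_eta]; simp [he0]
    · norm_num [he0]
  set M : ℝ := Q B e0 with hM
  set Rsq : ℝ := 1/δ + 2 * (max M 0) / c + 1 with hRsq
  clear_value M
  have hmc : 0 ≤ 2 * (max M 0) / c :=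
    div_nonneg (by positivity) hcpos.le
  have hod : 0 < 1/δ := by positivity
  have hRsqpos : 0 < Rsq := by
    rw [hRsq]; linarith
  clear_value Rsq
  have hbound : ∀ r : Fin 4 → ℝ, Q eta r = 1 → Q B r ≤ M → ‖r‖^2 ≤ Rsq := by
    intro r hr hQr
    by_contra hgt
    push_neg at hgt
    have hr0 : r ≠ 0 := by
      intro h; rw [h] at hr; rw [Q_eta] at hr; simp at hr
    have hnr : 0 < ‖r‖ := norm_pos_iff.mpr hr0
    set u : Fin 4 → ℝ := ‖r‖⁻¹ • r with hu
    have hun : ‖u‖ = 1 := by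
      rw [hu, norm_smul]
      simp [abs_of_pos (inv_pos.mpr hnr), inv_mul_cancel₀ hnr.ne']
    have hQetau : Q eta u = ‖r‖⁻¹^2 := by
      rw [hu, Q_smul, hr]; ring
    have huK : u ∈ K := ⟨hun, by rw [hQetau]; positivity⟩
    have hQetault : Q eta u < δ := by
      rw [hQetau]
      have hge : 1/δ + 1 ≤ Rsq := by rw [hRsq]; linarith
      have h1 : 1/δ < ‖r‖^2 := by linarith [hgt]
      have h2 : 1 < δ * ‖r‖^2 := by
        have := (div_lt_iff₀ hδpos).mp h1
        linarith [this]
      have hn2 : (0:ℝ) < ‖r‖^2 := by positivity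
      have h3 : (‖r‖^2)⁻¹ * 1 < (‖r‖^2)⁻¹ * (δ * ‖r‖^2) :=
        mul_lt_mul_of_pos_left h2 (inv_pos.mpr hn2)
      rw [inv_pow]
      calc (‖r‖^2)⁻¹ = (‖r‖^2)⁻¹ * 1 := by ring
        _ < (‖r‖^2)⁻¹ * (δ * ‖r‖^2) := h3
        _ = δ := by field_simp
    have hQBu : c/2 < Q B u := hδ u huK hQetault
    have hQBr : Q B r = ‖r‖^2 * Q B u := by
      have : r = ‖r‖ • u := by
        rw [hu, smul_smul, mul_inv_cancel₀ hnr.ne', one_smul]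
      calc Q B r = Q B (‖r‖ • u) := by rw [← this]
        _ = ‖r‖^2 * Q B u := Q_smul B _ u
    have h1 : (c/2) * ‖r‖^2 < Q B r := by
      rw [hQBr]
      have := mul_lt_mul_of_pos_left hQBu (show (0:ℝ) < ‖r‖^2 by positivity)
      linarith
    have h2 : (c/2) * Rsq ≤ (c/2) * ‖r‖^2 := by
      apply mul_le_mul_of_nonneg_left hgt.le (by positivity)
    have h3 : max M 0 ≤ (c/2) * Rsq := by
      rw [hRsq]
      have : (c/2) * (2 * max M 0 / c) = max M 0 := by field_simp
      have h4 : 0 < (c/2) * (1/δ + 1) := by positivity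
      nlinarith [le_max_right M 0, le_max_left M 0]
    have : M < Q B r := by
      calc M ≤ max M 0 := le_max_left M 0
        _ ≤ (c/2) * Rsq := h3
        _ ≤ (c/2) * ‖r‖^2 := h2
        _ < Q B r := h1
    linarith
  set S : Set (Fin 4 → ℝ) := {r | Q eta r = 1 ∧ 1 ≤ r 0 ∧ Q B r ≤ M} with hS
  have hScompact : IsCompact S := by
    apply Metric.isCompact_of_isClosed_isBounded
    · exact (isClosed_eq (contQ eta) continuous_const).inter
        ((isClosed_le continuous_const (continuous_apply 0)).inter
          (isClosed_le (contQ B) continuous_const))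
    · apply Bornology.IsBounded.subset
        (Metric.isBounded_closedBall (x := (0 : Fin 4 → ℝ)) (r := Real.sqrt Rsq))
      intro r hr
      simp only [Metric.mem_closedBall, dist_zero_right]
      have := hbound r hr.1 hr.2.2
      nlinarith [Real.sq_sqrt hRsqpos.le, Real.sqrt_nonneg Rsq, norm_nonneg r,
        Real.sqrt_le_sqrt this]
  have hSne : S.Nonempty := ⟨e0, he0H.1, he0H.2, hM.ge⟩
  obtain ⟨v, hvS, hvmin⟩ := hScompact.exists_isMinOn hSne (contQ B).continuousOn
  refine ⟨v, hvS.1, hvS.2.1, fun r hr1 hr2 => ?_⟩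
  by_cases h : Q B r ≤ M
  · exact hvmin ⟨hr1, hr2, h⟩
  · push_neg at h
    have h5 : Q B v ≤ Q B e0 := hvmin ⟨he0H.1, he0H.2, hM.ge⟩
    have h6 : Q B e0 ≤ M := hM.ge
    linarith

end MinExistence

section Lagrange

lemma lagrange (B : Matrix (Fin 4) (Fin 4) ℝ) (hB : B.IsSymm) (v : Fin 4 → ℝ)
    (hv1 : Q eta v = 1) (hv0 : 1 ≤ v 0)
    (hmin : ∀ r : Fin 4 → ℝ, Q eta r = 1 → 1 ≤ r 0 → Q B v ≤ Q B r) :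
    ∃ lam : ℝ, B.mulVec v = lam • eta.mulVec v := by
  have hextr : IsLocalExtrOn (Q B) {x | Q eta x = Q eta v} v := by
    left
    have hball : Metric.ball v (v 0) ∈ nhdsWithin v {x | Q eta x = Q eta v} :=
      nhdsWithin_le_nhds (Metric.ball_mem_nhds v (by linarith))
    filter_upwards [hball, self_mem_nhdsWithin] with x hx hxs
    have hx0 : 0 < x 0 := by
      have h1 : |x 0 - v 0| ≤ ‖x - v‖ := by
        have := norm_le_pi_norm (x - v) 0
        simpa using this
      have h2 : ‖x - v‖ < v 0 := by
        rw [← dist_eq_norm]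
        exact Metric.mem_ball.mp hx
      have := abs_lt.mp (lt_of_le_of_lt h1 h2)
      linarith [this.1]
    have hxQ : Q eta x = 1 := by rw [Set.mem_setOf_eq.mp hxs, hv1]
    have hx1 : 1 ≤ x 0 := by
      rw [Q_eta] at hxQ
      nlinarith [sq_nonneg (x 1), sq_nonneg (x 2), sq_nonneg (x 3)]
    exact hmin x hxQ hx1
  obtain ⟨a, b, hab, hsum⟩ :=
    hextr.exists_multipliers_of_hasStrictFDerivAt_1d (hasDeriv_qf eta v) (hasDeriv_qf B v)
  have hw : ∀ w : Fin 4 → ℝ, a * (v ⬝ᵥ eta.mulVec w) + b * (v ⬝ᵥ B.mulVec w) = 0 := by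
    intro w
    have h := ContinuousLinearMap.ext_iff.mp hsum w
    simp only [ContinuousLinearMap.add_apply, ContinuousLinearMap.smul_apply,
      ContinuousLinearMap.zero_apply, smul_eq_mul, qderiv_apply] at h
    rw [dp_symm_swap eta eta_symm w v, dp_symm_swap B hB w v] at h
    linarith
  have hvne : v ≠ 0 := by
    intro h
    rw [h] at hv0
    norm_num at hv0
  have hb : b ≠ 0 := by
    intro hb0
    have ha : a ≠ 0 := by
      intro ha0
      apply hab
      rw [ha0, hb0]
      rfl
    have hzero : ∀ w : Fin 4 → ℝ, v ⬝ᵥ eta.mulVec w = 0 := by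
      intro w
      have := hw w
      rw [hb0] at this
      simp at this
      rcases this with h | h
      · exact absurd h ha
      · exact h
    have := hzero (eta.mulVec v)
    rw [Matrix.mulVec_mulVec, eta_mul_eta, Matrix.one_mulVec] at this
    exact hvne (dotProduct_self_eq_zero.mp this)
  refine ⟨-a/b, ?_⟩
  funext k
  have h := hw (Pi.single k 1)
  have he : v ⬝ᵥ eta.mulVec (Pi.single k 1) = (eta.mulVec v) k := by
    rw [dp_symm_swap eta eta_symm, single_dotProduct, one_mul]
  have hb2 : v ⬝ᵥ B.mulVec (Pi.single k 1) = (B.mulVec v) k := by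
    rw [dp_symm_swap B hB, single_dotProduct, one_mul]
  rw [he, hb2] at h
  simp only [Pi.smul_apply, smul_eq_mul]
  field_simp
  linarith

end Lagrange

section Boost

noncomputable def boost (v : Fin 4 → ℝ) : Matrix (Fin 4) (Fin 4) ℝ :=
  !![v 0, v 1, v 2, v 3;
     v 1, 1 + v 1*v 1/(1+v 0), v 1*v 2/(1+v 0), v 1*v 3/(1+v 0);
     v 2, v 2*v 1/(1+v 0), 1 + v 2*v 2/(1+v 0), v 2*v 3/(1+v 0);
     v 3, v 3*v 1/(1+v 0), v 3*v 2/(1+v 0), 1 + v 3*v 3/(1+v 0)]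

lemma boost_col0 (v : Fin 4 → ℝ) (k : Fin 4) : boost v k 0 = v k := by
  fin_cases k <;> simp [boost]

lemma boost_lorentz (v : Fin 4 → ℝ) (hγ : 1 ≤ v 0)
    (hv : (v 0)^2 - (v 1)^2 - (v 2)^2 - (v 3)^2 = 1) :
    (boost v)ᵀ * eta * boost v = eta := by
  have h1γ : 1 + v 0 ≠ 0 := by linarith
  ext i j
  fin_cases i <;> fin_cases j <;>
    · simp [Matrix.mul_apply, Matrix.transpose_apply, Fin.sum_univ_four, boost, eta,
        Matrix.diagonal, Matrix.vecHead, Matrix.vecTail]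
      try field_simp
      first
        | linear_combination (1)*(1)*hv
        | linear_combination (1)*((1+v 0))*hv
        | linear_combination (1)*((1+v 0)^2)*hv
        | linear_combination (v 1)*(1)*hv
        | linear_combination (v 1)*((1+v 0))*hv
        | linear_combination (v 1)*((1+v 0)^2)*hv
        | linear_combination (v 2)*(1)*hv
        | linear_combination (v 2)*((1+v 0))*hv
        | linear_combination (v 2)*((1+v 0)^2)*hv
        | linear_combination (v 3)*(1)*hv
        | linear_combination (v 3)*((1+v 0))*hv
        | linear_combination (v 3)*((1+v 0)^2)*hv
        | linear_combination (v 1*v 1)*(1)*hv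
        | linear_combination (v 1*v 1)*((1+v 0))*hv
        | linear_combination (v 1*v 1)*((1+v 0)^2)*hv
        | linear_combination (v 1*v 2)*(1)*hv
        | linear_combination (v 1*v 2)*((1+v 0))*hv
        | linear_combination (v 1*v 2)*((1+v 0)^2)*hv
        | linear_combination (v 1*v 3)*(1)*hv
        | linear_combination (v 1*v 3)*((1+v 0))*hv
        | linear_combination (v 1*v 3)*((1+v 0)^2)*hv
        | linear_combination (v 2*v 2)*(1)*hv
        | linear_combination (v 2*v 2)*((1+v 0))*hv
        | linear_combination (v 2*v 2)*((1+v 0)^2)*hv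
        | linear_combination (v 2*v 3)*(1)*hv
        | linear_combination (v 2*v 3)*((1+v 0))*hv
        | linear_combination (v 2*v 3)*((1+v 0)^2)*hv
        | linear_combination (v 3*v 3)*(1)*hv
        | linear_combination (v 3*v 3)*((1+v 0))*hv
        | linear_combination (v 3*v 3)*((1+v 0)^2)*hv

lemma boost_conj_row0 (B : Matrix (Fin 4) (Fin 4) ℝ) (hB : B.IsSymm) (v : Fin 4 → ℝ) (lam : ℝ)
    (hγ : 1 ≤ v 0) (hv : (v 0)^2 - (v 1)^2 - (v 2)^2 - (v 3)^2 = 1)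
    (hBv : B.mulVec v = lam • eta.mulVec v) :
    ∀ i : Fin 4, ((boost v)ᵀ * B * boost v) 0 i = lam * eta 0 i := by
  have hrow : ∀ (X : Matrix (Fin 4) (Fin 4) ℝ) (i : Fin 4), ((boost v)ᵀ * X * boost v) 0 i
      = ((v ᵥ* X) ᵥ* boost v) i := by
    intro X i
    rw [conj_entry]
    simp only [Matrix.vecMul, dotProduct, boost_col0]
  have hvB : v ᵥ* B = lam • (v ᵥ* eta) := by
    calc v ᵥ* B = Bᵀ *ᵥ v := (Matrix.mulVec_transpose B v).symm
      _ = B *ᵥ v := by rw [hB.eq]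
      _ = lam • (eta *ᵥ v) := hBv
      _ = lam • (etaᵀ *ᵥ v) := by rw [eta_symm.eq]
      _ = lam • (v ᵥ* eta) := by rw [Matrix.mulVec_transpose]
  intro i
  rw [hrow, hvB, Matrix.smul_vecMul, Pi.smul_apply, smul_eq_mul]
  have := hrow eta i
  rw [boost_lorentz v hγ hv] at this
  rw [← this]

end Boost

section Pad

noncomputable def pad (O : Matrix (Fin 3) (Fin 3) ℝ) : Matrix (Fin 4) (Fin 4) ℝ :=
  !![1, 0, 0, 0;
     0, O 0 0, O 0 1, O 0 2;
     0, O 1 0, O 1 1, O 1 2;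
     0, O 2 0, O 2 1, O 2 2]

lemma pad_eta (O : Matrix (Fin 3) (Fin 3) ℝ) (hO : Oᵀ * O = 1) :
    (pad O)ᵀ * eta * (pad O) = eta := by
  have hOO : ∀ a b : Fin 3,
      O 0 a * O 0 b + O 1 a * O 1 b + O 2 a * O 2 b = if a = b then 1 else 0 := by
    intro a b
    have h : (Oᵀ * O) a b = (1 : Matrix (Fin 3) (Fin 3) ℝ) a b := by rw [hO]
    rw [Matrix.mul_apply, Fin.sum_univ_three, Matrix.one_apply] at h
    simpa [Matrix.transpose_apply] using h
  have h00 := hOO 0 0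
  have h11 := hOO 1 1
  have h22 := hOO 2 2
  have h01 := hOO 0 1
  have h02 := hOO 0 2
  have h10 := hOO 1 0
  have h12 := hOO 1 2
  have h20 := hOO 2 0
  have h21 := hOO 2 1
  norm_num [Fin.ext_iff] at h00 h11 h22 h01 h02 h10 h12 h20 h21
  ext a b
  fin_cases a <;> fin_cases b <;>
    · simp [Matrix.mul_apply, Matrix.transpose_apply, Fin.sum_univ_four, pad, eta,
        Matrix.diagonal, Matrix.vecHead, Matrix.vecTail]
      try linarith [h00, h11, h22, h01, h02, h10, h12, h20, h21]

lemma pad_isDiag (O : Matrix (Fin 3) (Fin 3) ℝ) (X : Matrix (Fin 4) (Fin 4) ℝ) (μ : Fin 3 → ℝ)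
    (h0l : ∀ l : Fin 4, l ≠ 0 → X 0 l = 0) (hl0 : ∀ l : Fin 4, l ≠ 0 → X l 0 = 0)
    (hOS : Oᵀ * !![X 1 1, X 1 2, X 1 3; X 2 1, X 2 2, X 2 3; X 3 1, X 3 2, X 3 3] * O
      = Matrix.diagonal μ) :
    ((pad O)ᵀ * X * (pad O)).IsDiag := by
  have hd : ∀ a b : Fin 3, a ≠ b →
      (Oᵀ * !![X 1 1, X 1 2, X 1 3; X 2 1, X 2 2, X 2 3; X 3 1, X 3 2, X 3 3] * O) a b = 0 := by
    intro a b hab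
    rw [hOS, Matrix.diagonal_apply_ne _ hab]
  have hd01 := hd 0 1 (by decide)
  have hd02 := hd 0 2 (by decide)
  have hd10 := hd 1 0 (by decide)
  have hd12 := hd 1 2 (by decide)
  have hd20 := hd 2 0 (by decide)
  have hd21 := hd 2 1 (by decide)
  simp [conj_entry, Fin.sum_univ_three, Matrix.vecHead, Matrix.vecTail]
    at hd01 hd02 hd10 hd12 hd20 hd21
  have e01 := h0l 1 (by decide)
  have e02 := h0l 2 (by decide)
  have e03 := h0l 3 (by decide)
  have e10 := hl0 1 (by decide)
  have e20 := hl0 2 (by decide)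
  have e30 := hl0 3 (by decide)
  intro a b hab
  fin_cases a <;> fin_cases b <;>
    first
      | (exact absurd rfl hab)
      | (exact absurd (by decide) hab)
      | (simp [Matrix.mul_apply, Matrix.transpose_apply, Fin.sum_univ_four, pad,
          Matrix.vecHead, Matrix.vecTail, e01, e02, e03, e10, e20, e30]
         try linarith [hd01, hd02, hd10, hd12, hd20, hd21])

end Pad

section Spectral

lemma spectral3 (S : Matrix (Fin 3) (Fin 3) ℝ) (hSymm : S.IsSymm) :
    ∃ O : Matrix (Fin 3) (Fin 3) ℝ, ∃ μ : Fin 3 → ℝ,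
      Oᵀ * O = 1 ∧ Oᵀ * S * O = Matrix.diagonal μ := by
  have hS : S.IsHermitian := by
    rw [Matrix.IsHermitian, Matrix.conjTranspose_eq_transpose_of_trivial]
    exact hSymm.eq
  set O : Matrix (Fin 3) (Fin 3) ℝ :=
    (Matrix.IsHermitian.eigenvectorUnitary hS : Matrix (Fin 3) (Fin 3) ℝ) with hO
  have hstar : star O * O = 1 :=
    Unitary.star_mul_self_of_mem (Matrix.IsHermitian.eigenvectorUnitary hS).2
  have hstarT : star O = Oᵀ := by
    rw [Matrix.star_eq_conjTranspose, Matrix.conjTranspose_eq_transpose_of_trivial]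
  refine ⟨O, hS.eigenvalues, by rw [← hstarT]; exact hstar, ?_⟩
  have spec := hS.spectral_theorem
  rw [Unitary.conjStarAlgAut_apply] at spec
  have hdiag : Matrix.diagonal (RCLike.ofReal ∘ hS.eigenvalues)
      = Matrix.diagonal hS.eigenvalues := by rfl
  rw [← hstarT]
  calc star O * S * O
      = star O * (O * Matrix.diagonal (RCLike.ofReal ∘ hS.eigenvalues) * star O) * O := by
        rw [← spec]
    _ = (star O * O) * Matrix.diagonal (RCLike.ofReal ∘ hS.eigenvalues) * (star O * O) := by
        simp only [Matrix.mul_assoc]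
    _ = Matrix.diagonal hS.eigenvalues := by rw [hstar, hdiag]; simp

end Spectral

section FinalPieces

lemma eta_0l (l : Fin 4) (hl : l ≠ 0) : eta 0 l = 0 := by
  fin_cases l
  · exact absurd rfl hl
  all_goals (simp [eta, Matrix.diagonal, Fin.ext_iff]; try decide)

lemma diag_pair (D : Matrix (Fin 4) (Fin 4) ℝ) (hD : D.IsDiag) (i : Fin 4) (hi : i ≠ 0) :
    (Pi.single 0 1 + Pi.single i 1 : Fin 4 → ℝ) ⬝ᵥ
      D.mulVec (Pi.single 0 1 + Pi.single i 1) = D 0 0 + D i i := by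
  have h01 : D 0 1 = 0 := hD (by decide)
  have h02 : D 0 2 = 0 := hD (by decide)
  have h03 : D 0 3 = 0 := hD (by decide)
  have h10 : D 1 0 = 0 := hD (by decide)
  have h20 : D 2 0 = 0 := hD (by decide)
  have h30 : D 3 0 = 0 := hD (by decide)
  rw [dp_expand]
  fin_cases i
  · exact absurd rfl hi
  all_goals
    simp [Fin.sum_univ_four, Pi.single_apply,
      h01, h02, h03, h10, h20, h30]

lemma eta_pair (i : Fin 4) (hi : i ≠ 0) :
    Q eta (Pi.single 0 1 + Pi.single i 1 : Fin 4 → ℝ) = 0 := by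
  rw [Q_eta]
  fin_cases i
  · exact absurd rfl hi
  all_goals
    simp (config := { decide := true }) [Pi.single_apply, Fin.ext_iff]

end FinalPieces

/-- Positivity of the quadratic form on the forward lightcone is equivalent to
Lorentz diagonalizability with the timelike eigenvalue dominating. -/
theorem pos_on_lightcone_iff_lorentz_diagonalizable
    (B : Matrix (Fin 4) (Fin 4) ℝ) (hB : B.IsSymm) :
    (∀ r ∈ LCplus, r ≠ 0 → 0 < Q B r) ↔
      ∃ Λ : Matrix (Fin 4) (Fin 4) ℝ,
        Λᵀ * eta * Λ = eta ∧
        (Λᵀ * B * Λ).IsDiag ∧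
        ∀ i : Fin 4, i ≠ 0 → 0 < (Λᵀ * B * Λ) 0 0 + (Λᵀ * B * Λ) i i := by
  constructor
  · -- forward direction
    intro h
    have hpos := pos_null B h
    obtain ⟨v, hv1, hv0, hmin⟩ := exists_min B hpos
    obtain ⟨lam, hBv⟩ := lagrange B hB v hv1 hv0 hmin
    have hvpoly : (v 0)^2 - (v 1)^2 - (v 2)^2 - (v 3)^2 = 1 := by
      rw [Q_eta] at hv1; linarith
    set B' := (boost v)ᵀ * B * boost v with hB'
    have hrow0 := boost_conj_row0 B hB v lam hv0 hvpoly hBv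
    have hB'symm : B'.IsSymm := conj_symm _ B hB
    have hB'entry : ∀ i j : Fin 4, B' i j = B' j i := by
      intro i j
      have := congrFun (congrFun hB'symm.eq j) i
      rw [Matrix.transpose_apply] at this
      exact this
    have h0l : ∀ l : Fin 4, l ≠ 0 → B' 0 l = 0 := by
      intro l hl
      rw [hB', hrow0 l, eta_0l l hl, mul_zero]
    have hl0 : ∀ l : Fin 4, l ≠ 0 → B' l 0 = 0 := by
      intro l hl
      rw [hB'entry l 0]
      exact h0l l hl
    set S : Matrix (Fin 3) (Fin 3) ℝ :=
      !![B' 1 1, B' 1 2, B' 1 3; B' 2 1, B' 2 2, B' 2 3; B' 3 1, B' 3 2, B' 3 3] with hSdef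
    have hSsymm : S.IsSymm := by
      unfold Matrix.IsSymm
      ext a b
      fin_cases a <;> fin_cases b <;>
        simp [hSdef, Matrix.transpose_apply, Matrix.vecHead, Matrix.vecTail] <;>
        first
          | rfl
          | (apply hB'entry)
    obtain ⟨O, μ, hOorth, hOS⟩ := spectral3 S hSsymm
    refine ⟨boost v * pad O, ?_, ?_, ?_⟩
    · rw [Matrix.transpose_mul]
      calc (pad O)ᵀ * (boost v)ᵀ * eta * (boost v * pad O)
          = (pad O)ᵀ * ((boost v)ᵀ * eta * boost v) * pad O := by
            simp only [Matrix.mul_assoc]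
      _ = (pad O)ᵀ * eta * pad O := by rw [boost_lorentz v hv0 hvpoly]
      _ = eta := pad_eta O hOorth
    · have hconj : (boost v * pad O)ᵀ * B * (boost v * pad O) = (pad O)ᵀ * B' * pad O := by
        rw [Matrix.transpose_mul, hB']
        simp only [Matrix.mul_assoc]
      rw [hconj]
      exact pad_isDiag O B' μ h0l hl0 (by rw [← hSdef]; exact hOS)
    · intro i hi
      set Λ := boost v * pad O with hΛ
      have hΛeta : Λᵀ * eta * Λ = eta := by
        rw [hΛ, Matrix.transpose_mul]
        calc (pad O)ᵀ * (boost v)ᵀ * eta * (boost v * pad O)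
            = (pad O)ᵀ * ((boost v)ᵀ * eta * boost v) * pad O := by
              simp only [Matrix.mul_assoc]
        _ = (pad O)ᵀ * eta * pad O := by rw [boost_lorentz v hv0 hvpoly]
        _ = eta := pad_eta O hOorth
      have hDiag : (Λᵀ * B * Λ).IsDiag := by
        have hconj : Λᵀ * B * Λ = (pad O)ᵀ * B' * pad O := by
          rw [hΛ, Matrix.transpose_mul, hB']
          simp only [Matrix.mul_assoc]
        rw [hconj]
        exact pad_isDiag O B' μ h0l hl0 (by rw [← hSdef]; exact hOS)
      set u : Fin 4 → ℝ := Pi.single 0 1 + Pi.single i 1 with hu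
      have hu0 : u 0 = 1 := by
        rw [hu]
        simp [Pi.single_apply, Ne.symm hi]
      set x := Λ.mulVec u with hx
      have hQBx : Q B x = (Λᵀ * B * Λ) 0 0 + (Λᵀ * B * Λ) i i := by
        rw [hx, Q_mulVec]
        exact diag_pair _ hDiag i hi
      have hQetax : Q eta x = 0 := by
        rw [hx, Q_mulVec, hΛeta]
        have : u ⬝ᵥ eta.mulVec u = Q eta u := rfl
        rw [this, hu, eta_pair i hi]
      have hleft : (eta * Λᵀ * eta) * Λ = 1 := by
        calc (eta * Λᵀ * eta) * Λ = eta * (Λᵀ * eta * Λ) := by simp only [Matrix.mul_assoc]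
          _ = eta * eta := by rw [hΛeta]
          _ = 1 := eta_mul_eta
      have hxne : x ≠ 0 := by
        intro hc
        have : u = 0 := by
          have h1 : (eta * Λᵀ * eta).mulVec x = u := by
            rw [hx, Matrix.mulVec_mulVec, hleft, Matrix.one_mulVec]
          rw [hc, Matrix.mulVec_zero] at h1
          exact h1.symm
        rw [this] at hu0
        norm_num at hu0
      have hfinal : 0 < Q B x := by
        rw [Q_eta] at hQetax
        by_cases hsgn : 0 ≤ x 0
        · exact h x ⟨hsgn, by linarith⟩ hxne
        · have h1 : (-x) ∈ LCplus := by
            constructor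
            · simp; linarith [not_le.mp hsgn]
            · simp; linarith
          have h2 : (-x) ≠ 0 := fun hc => hxne (by simpa using congrArg Neg.neg hc)
          have := h (-x) h1 h2
          rwa [Q_neg] at this
      rw [hQBx] at hfinal
      exact hfinal
  · -- backward direction
    rintro ⟨Λ, hΛ, hD, hpos⟩
    intro r hr hr0
    set D := Λᵀ * B * Λ with hDdef
    have hinv : Λ * (eta * Λᵀ * eta) = 1 := by
      have h1 : (eta * Λᵀ * eta) * Λ = 1 := by
        calc (eta * Λᵀ * eta) * Λ = eta * (Λᵀ * eta * Λ) := by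
              simp only [Matrix.mul_assoc]
          _ = eta * eta := by rw [hΛ]
          _ = 1 := eta_mul_eta
      exact mul_eq_one_comm.mp h1
    set s := (eta * Λᵀ * eta).mulVec r with hs
    have hrs : Λ.mulVec s = r := by
      rw [hs, mulVec_mulVec, hinv, one_mulVec]
    have hQB : Q B r = s ⬝ᵥ D.mulVec s := by rw [← hrs, Q_mulVec]
    have hQeta : Q eta r = s ⬝ᵥ eta.mulVec s := by
      rw [← hrs, Q_mulVec, hΛ]
    have hs0 : s ≠ 0 := by
      intro h
      apply hr0
      rw [← hrs, h, mulVec_zero]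
    clear_value s
    have hnull : (s 0)^2 = (s 1)^2 + (s 2)^2 + (s 3)^2 := by
      have : Q eta r = 0 := by rw [Q_eta]; obtain ⟨_, h2⟩ := hr; linarith [h2]
      rw [hQeta] at this
      have h2 : s ⬝ᵥ eta.mulVec s = (s 0)^2 - (s 1)^2 - (s 2)^2 - (s 3)^2 := Q_eta s
      linarith [h2 ▸ this]
    have hDexp : s ⬝ᵥ D.mulVec s
        = D 0 0 * (s 0)^2 + D 1 1 * (s 1)^2 + D 2 2 * (s 2)^2 + D 3 3 * (s 3)^2 := by
      have h01 : D 0 1 = 0 := hD (by decide)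
      have h02 : D 0 2 = 0 := hD (by decide)
      have h03 : D 0 3 = 0 := hD (by decide)
      have h10 : D 1 0 = 0 := hD (by decide)
      have h12 : D 1 2 = 0 := hD (by decide)
      have h13 : D 1 3 = 0 := hD (by decide)
      have h20 : D 2 0 = 0 := hD (by decide)
      have h21 : D 2 1 = 0 := hD (by decide)
      have h23 : D 2 3 = 0 := hD (by decide)
      have h30 : D 3 0 = 0 := hD (by decide)
      have h31 : D 3 1 = 0 := hD (by decide)
      have h32 : D 3 2 = 0 := hD (by decide)
      simp [dotProduct, Matrix.mulVec, Fin.sum_univ_four, h01, h02, h03, h10, h12, h13,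
        h20, h21, h23, h30, h31, h32]
      ring
    have hsp : (s 1)^2 + (s 2)^2 + (s 3)^2 > 0 := by
      rcases eq_or_ne (s 1) 0 with h1 | h1
      · rcases eq_or_ne (s 2) 0 with h2 | h2
        · rcases eq_or_ne (s 3) 0 with h3 | h3
          · exfalso
            obtain ⟨i, hi⟩ := Function.ne_iff.mp hs0
            have h0 : s 0 = 0 := by
              have h := hnull; rw [h1, h2, h3] at h; nlinarith
            fin_cases i <;> simp_all
          · positivity
        · positivity
      · positivity
    rw [hQB, hDexp]
    have e1 := hpos 1 (by decide)
    have e2 := hpos 2 (by decide)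
    have e3 := hpos 3 (by decide)
    have key : D 0 0 * (s 0)^2 + D 1 1 * (s 1)^2 + D 2 2 * (s 2)^2 + D 3 3 * (s 3)^2
        = (D 0 0 + D 1 1) * (s 1)^2 + (D 0 0 + D 2 2) * (s 2)^2 + (D 0 0 + D 3 3) * (s 3)^2 := by
      rw [hnull]; ring
    rw [key]
    have hone : 0 < (s 1)^2 ∨ 0 < (s 2)^2 ∨ 0 < (s 3)^2 := by
      by_contra hcon
      push_neg at hcon
      obtain ⟨a1, a2, a3⟩ := hcon
      nlinarith [sq_nonneg (s 1), sq_nonneg (s 2), sq_nonneg (s 3)]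
    have t1 : 0 ≤ (D 0 0 + D 1 1) * (s 1)^2 := mul_nonneg e1.le (sq_nonneg _)
    have t2 : 0 ≤ (D 0 0 + D 2 2) * (s 2)^2 := mul_nonneg e2.le (sq_nonneg _)
    have t3 : 0 ≤ (D 0 0 + D 3 3) * (s 3)^2 := mul_nonneg e3.le (sq_nonneg _)
    rcases hone with hcase | hcase | hcase
    · nlinarith [mul_pos e1 hcase]
    · nlinarith [mul_pos e2 hcase]
    · nlinarith [mul_pos e3 hcase]
end

section
/- If Q(r) > 0 for every nonzero r ∈ LC⁺, then every eigenvalue of the matrix η·B (equivalently, every complex root of the characteristic polynomial of η·B) is real. -/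
open Matrix

/- ---------- auxiliary lemmas ---------- -/

lemma dot4 (u w : Fin 4 → ℝ) :
    u ⬝ᵥ w = u 0 * w 0 + u 1 * w 1 + u 2 * w 2 + u 3 * w 3 := by
  simp [dotProduct, Fin.sum_univ_four]

lemma etaApp (u : Fin 4 → ℝ) (k : Fin 4) :
    (eta *ᵥ u) k = ![u 0, -u 1, -u 2, -u 3] k := by
  fin_cases k <;> simp [eta, Matrix.mulVec_diagonal]

lemma etaDot (u w : Fin 4 → ℝ) :
    u ⬝ᵥ eta *ᵥ w = u 0 * w 0 - u 1 * w 1 - u 2 * w 2 - u 3 * w 3 := by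
  rw [dot4, etaApp, etaApp, etaApp, etaApp]
  simp
  ring

lemma mapRe (A : Matrix (Fin 4) (Fin 4) ℝ) (v : Fin 4 → ℂ) (i : Fin 4) :
    (((A.map (algebraMap ℝ ℂ)).mulVec v) i).re = (A.mulVec (fun j => (v j).re)) i := by
  simp [Matrix.mulVec, dotProduct, Fin.sum_univ_four]

lemma mapIm (A : Matrix (Fin 4) (Fin 4) ℝ) (v : Fin 4 → ℂ) (i : Fin 4) :
    (((A.map (algebraMap ℝ ℂ)).mulVec v) i).im = (A.mulVec (fun j => (v j).im)) i := by
  simp [Matrix.mulVec, dotProduct, Fin.sum_univ_four]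

/-- Existence of an eigenvector for a root of the characteristic polynomial. -/
lemma exists_eigvec (M : Matrix (Fin 4) (Fin 4) ℂ) (z : ℂ) (h : M.charpoly.IsRoot z) :
    ∃ v : Fin 4 → ℂ, v ≠ 0 ∧ M.mulVec v = z • v := by
  have hdet : (Matrix.scalar (Fin 4) z - M).det = 0 := by
    have := h
    unfold Matrix.charpoly at this
    rw [Polynomial.IsRoot, _root_.eval_det, matPolyEquiv_charmatrix] at this
    simpa using this
  obtain ⟨v, hv0, hv⟩ := (Matrix.exists_mulVec_eq_zero_iff).2 hdet
  refine ⟨v, hv0, ?_⟩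
  rw [Matrix.sub_mulVec] at hv
  have hz : (Matrix.scalar (Fin 4) z) *ᵥ v = z • v := by
    funext i
    simp [Matrix.scalar, Matrix.mulVec_diagonal, Pi.algebraMap_apply]
  rw [hz] at hv
  exact (sub_eq_zero.mp hv).symm

/-- choice of a null direction in the plane where `M ≠ 0`. -/
lemma key (p q : ℝ) (h : p ≠ 0 ∨ q ≠ 0) : ∃ s t : ℝ,
    p * (s^2 - t^2) + 2 * q * (s * t) = 0 ∧ 2 * (s * t) * p - (s^2 - t^2) * q ≠ 0 := by
  by_cases hp : p = 0
  · refine ⟨1, 0, by simp [hp], ?_⟩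
    have hq : q ≠ 0 := by rcases h with h | h; exact absurd hp h; exact h
    simpa using hq
  · set d := Real.sqrt (p^2 + q^2) with hdd
    have hd2 : d^2 = p^2 + q^2 := Real.sq_sqrt (by positivity)
    have hd0 : 0 ≤ d := Real.sqrt_nonneg _
    have hp2 : 0 < p^2 := by positivity
    have hqd : q < d := by nlinarith
    have hdpos : 0 < d := by nlinarith
    refine ⟨d - q, p, by linear_combination p * hd2, ?_⟩
    have h2 : 2 * ((d - q) * p) * p - ((d - q)^2 - p^2) * q = 2 * (d - q) * d^2 := by
      linear_combination (q - 2*d) * hd2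
    rw [h2]
    exact ne_of_gt (by nlinarith)

/-- the value of the quadratic form of `B` on the plane spanned by `x, y`. -/
lemma planeQ (B : Matrix (Fin 4) (Fin 4) ℝ) (x y : Fin 4 → ℝ) (a b s t : ℝ)
    (hre : ∀ i, (B *ᵥ x) i = a * (eta *ᵥ x) i - b * (eta *ᵥ y) i)
    (him : ∀ i, (B *ᵥ y) i = b * (eta *ᵥ x) i + a * (eta *ᵥ y) i)
    (hpp : y ⬝ᵥ eta *ᵥ y = -(x ⬝ᵥ eta *ᵥ x)) :
    (fun i => s * x i + t * y i) ⬝ᵥ B *ᵥ (fun i => s * x i + t * y i)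
      = a * ((x ⬝ᵥ eta *ᵥ x) * (s^2 - t^2) + 2 * (x ⬝ᵥ eta *ᵥ y) * (s * t))
        + b * (2 * (s * t) * (x ⬝ᵥ eta *ᵥ x) - (s^2 - t^2) * (x ⬝ᵥ eta *ᵥ y)) := by
  have hc : ∀ k, (B *ᵥ fun i => s * x i + t * y i) k = s * (B *ᵥ x) k + t * (B *ᵥ y) k := by
    intro k; simp [Matrix.mulVec, dotProduct, Fin.sum_univ_four]; ring
  rw [dot4, hc 0, hc 1, hc 2, hc 3, hre 0, hre 1, hre 2, hre 3,
      him 0, him 1, him 2, him 3, etaDot, etaDot]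
  rw [etaDot, etaDot] at hpp
  simp only [etaApp]
  simp only [Matrix.cons_val_zero, Matrix.cons_val_one, Matrix.head_cons,
    Matrix.cons_val_two, Matrix.tail_cons, Matrix.cons_val_three]
  linear_combination (a * t^2 - b * s * t) * hpp

/-- the value of the eta form on the plane spanned by `x, y`. -/
lemma planeN (x y : Fin 4 → ℝ) (s t : ℝ)
    (hpp : y ⬝ᵥ eta *ᵥ y = -(x ⬝ᵥ eta *ᵥ x)) :
    (fun i => s * x i + t * y i) ⬝ᵥ eta *ᵥ (fun i => s * x i + t * y i)
      = (x ⬝ᵥ eta *ᵥ x) * (s^2 - t^2) + 2 * (x ⬝ᵥ eta *ᵥ y) * (s * t) := by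
  rw [etaDot, etaDot, etaDot] at *
  linear_combination t^2 * hpp

/-- If the quadratic form is positive on the punctured forward lightcone, then all
complex roots of the characteristic polynomial of η·B are real. -/
theorem eigenvalues_real_of_pos_on_lightcone
    (B : Matrix (Fin 4) (Fin 4) ℝ) (hB : B.IsSymm)
    (hpos : ∀ r ∈ LCplus, r ≠ 0 → 0 < Q B r) :
    ∀ z : ℂ, (Matrix.charpoly ((eta * B).map (algebraMap ℝ ℂ))).IsRoot z → z.im = 0 := by
  intro z hroot
  by_contra hb
  -- positivity on all nonzero null vectors
  have hQpos : ∀ r : Fin 4 → ℝ, r ⬝ᵥ eta *ᵥ r = 0 → r ≠ 0 → 0 < Q B r := by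
    intro r hnull hr0
    rw [etaDot] at hnull
    by_cases h0 : 0 ≤ r 0
    · exact hpos r ⟨h0, by nlinarith⟩ hr0
    · have : 0 < Q B (-r) := by
        refine hpos (-r) ⟨by simpa using le_of_lt (not_le.mp h0), by simp; nlinarith⟩ (by simpa using hr0)
      simpa [Q, Matrix.mulVec_neg, dotProduct_neg, neg_dotProduct] using this
  obtain ⟨v, hv0, hv⟩ := exists_eigvec _ z hroot
  set x : Fin 4 → ℝ := fun i => (v i).re with hx
  set y : Fin 4 → ℝ := fun i => (v i).im with hy
  set a : ℝ := z.re with ha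
  set b : ℝ := z.im with hbb
  -- B_ℂ v = z • η_ℂ v
  have hBv : (B.map (algebraMap ℝ ℂ)).mulVec v = z • (eta.map (algebraMap ℝ ℂ)).mulVec v := by
    have h1 : (eta.map (algebraMap ℝ ℂ)) * ((eta * B).map (algebraMap ℝ ℂ))
        = B.map (algebraMap ℝ ℂ) := by
      rw [← Matrix.map_mul, ← mul_assoc, eta_mul_eta, one_mul]
    calc (B.map (algebraMap ℝ ℂ)).mulVec v
        = ((eta.map (algebraMap ℝ ℂ)) * ((eta * B).map (algebraMap ℝ ℂ))).mulVec v := by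
          rw [h1]
      _ = (eta.map (algebraMap ℝ ℂ)).mulVec (((eta * B).map (algebraMap ℝ ℂ)).mulVec v) := by
          rw [Matrix.mulVec_mulVec]
      _ = (eta.map (algebraMap ℝ ℂ)).mulVec (z • v) := by rw [hv]
      _ = z • (eta.map (algebraMap ℝ ℂ)).mulVec v := by rw [Matrix.mulVec_smul]
  -- real and imaginary parts
  have hre : ∀ i, (B *ᵥ x) i = a * (eta *ᵥ x) i - b * (eta *ᵥ y) i := by
    intro i
    have h1 := congrArg Complex.re (congrFun hBv i)
    rw [mapRe] at h1
    rw [h1, Pi.smul_apply, smul_eq_mul, Complex.mul_re, mapRe, mapIm]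
  have him : ∀ i, (B *ᵥ y) i = b * (eta *ᵥ x) i + a * (eta *ᵥ y) i := by
    intro i
    have h1 := congrArg Complex.im (congrFun hBv i)
    rw [mapIm] at h1
    rw [h1, Pi.smul_apply, smul_eq_mul, Complex.mul_im, mapRe, mapIm]
    ring
  -- symmetry of B gives p' = -p
  have hsym : x ⬝ᵥ B *ᵥ y = y ⬝ᵥ B *ᵥ x := by
    rw [Matrix.dotProduct_mulVec, ← Matrix.mulVec_transpose, hB.eq, dotProduct_comm]
  have hpp : y ⬝ᵥ eta *ᵥ y = -(x ⬝ᵥ eta *ᵥ x) := by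
    have e3 : x ⬝ᵥ B *ᵥ y = b * (x ⬝ᵥ eta *ᵥ x) + a * (x ⬝ᵥ eta *ᵥ y) := by
      rw [dot4, him 0, him 1, him 2, him 3, dot4 x (eta *ᵥ x), dot4 x (eta *ᵥ y)]
      ring
    have e4 : y ⬝ᵥ B *ᵥ x = a * (y ⬝ᵥ eta *ᵥ x) - b * (y ⬝ᵥ eta *ᵥ y) := by
      rw [dot4, hre 0, hre 1, hre 2, hre 3, dot4 y (eta *ᵥ x), dot4 y (eta *ᵥ y)]
      ring
    have hqq : y ⬝ᵥ eta *ᵥ x = x ⬝ᵥ eta *ᵥ y := by rw [etaDot, etaDot]; ring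
    have hb' : b ≠ 0 := hb
    have : b * ((x ⬝ᵥ eta *ᵥ x) + (y ⬝ᵥ eta *ᵥ y)) = 0 := by
      rw [hsym] at e3
      rw [e4, hqq] at e3
      linarith [e3]
    have := mul_eq_zero.mp this
    rcases this with h | h
    · exact absurd h hb'
    · linarith
  set p : ℝ := x ⬝ᵥ eta *ᵥ x with hp
  set q : ℝ := x ⬝ᵥ eta *ᵥ y with hq
  by_cases hpq : p ≠ 0 ∨ q ≠ 0
  · obtain ⟨s, t, hN, hM⟩ := key p q hpq
    set r : Fin 4 → ℝ := fun i => s * x i + t * y i with hr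
    set r' : Fin 4 → ℝ := fun i => -t * x i + s * y i with hr'
    have hQr : Q B r = a * (p * (s^2 - t^2) + 2 * q * (s * t))
        + b * (2 * (s * t) * p - (s^2 - t^2) * q) := by
      rw [Q, hr]
      rw [planeQ B x y a b s t hre him hpp]
    have hQr' : Q B r' = a * (p * ((-t)^2 - s^2) + 2 * q * (-t * s))
        + b * (2 * (-t * s) * p - ((-t)^2 - s^2) * q) := by
      rw [Q, hr']
      rw [planeQ B x y a b (-t) s hre him hpp]
    have hNr : r ⬝ᵥ eta *ᵥ r = 0 := by
      rw [hr, planeN x y s t hpp]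
      linear_combination hN
    have hNr' : r' ⬝ᵥ eta *ᵥ r' = 0 := by
      rw [hr', planeN x y (-t) s hpp]
      linear_combination -hN
    have hQrv : Q B r = b * (2 * (s * t) * p - (s^2 - t^2) * q) := by
      rw [hQr, hN]; ring
    have hQrv' : Q B r' = -(b * (2 * (s * t) * p - (s^2 - t^2) * q)) := by
      rw [hQr']; linear_combination (-a) * hN
    have hQne : Q B r ≠ 0 := by
      rw [hQrv]; exact mul_ne_zero hb hM
    have hr0 : r ≠ 0 := by
      intro h; apply hQne; rw [h]; simp [Q]
    have hr0' : r' ≠ 0 := by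
      intro h
      have : Q B r' = 0 := by rw [h]; simp [Q]
      rw [hQrv'] at this
      exact hQne (by rw [hQrv]; linarith)
    have h1 := hQpos r hNr hr0
    have h2 := hQpos r' hNr' hr0'
    rw [hQrv] at h1
    rw [hQrv'] at h2
    linarith
  · -- p = q = 0 : x and y are both null with Q = 0
    push_neg at hpq
    obtain ⟨hp0, hq0⟩ := hpq
    have hxB : x ⬝ᵥ B *ᵥ x = 0 := by
      rw [dot4, hre 0, hre 1, hre 2, hre 3]
      have : a * (x ⬝ᵥ eta *ᵥ x) - b * (x ⬝ᵥ eta *ᵥ y) = 0 := by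
        rw [← hp, ← hq, hp0, hq0]; ring
      rw [dot4 x (eta *ᵥ x), dot4 x (eta *ᵥ y)] at this
      linear_combination this
    have hyB : y ⬝ᵥ B *ᵥ y = 0 := by
      rw [dot4, him 0, him 1, him 2, him 3]
      have hqq : y ⬝ᵥ eta *ᵥ x = x ⬝ᵥ eta *ᵥ y := by rw [etaDot, etaDot]; ring
      have : b * (y ⬝ᵥ eta *ᵥ x) + a * (y ⬝ᵥ eta *ᵥ y) = 0 := by
        rw [hqq, ← hq, hq0, hpp, hp0]; ring
      rw [dot4 y (eta *ᵥ x), dot4 y (eta *ᵥ y)] at this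
      linear_combination this
    have hx0 : x = 0 := by
      by_contra hx0
      have := hQpos x (by rw [← hp]; exact hp0) hx0
      rw [Q] at this; rw [hxB] at this; exact lt_irrefl 0 this
    have hy0 : y = 0 := by
      by_contra hy0
      have hynull : y ⬝ᵥ eta *ᵥ y = 0 := by rw [hpp, hp0]; ring
      have := hQpos y hynull hy0
      rw [Q] at this; rw [hyB] at this; exact lt_irrefl 0 this
    apply hv0
    funext i
    have h1 : (v i).re = 0 := by rw [hx] at hx0; exact congrFun hx0 i
    have h2 : (v i).im = 0 := by rw [hy] at hy0; exact congrFun hy0 i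
    exact Complex.ext h1 h2
end

section
/- Suppose Q(r) ≥ 0 for every r ∈ LC⁺, and suppose r* ∈ LC⁺ is nonzero with Q(r*) = 0 (a flat direction of the quartic form). Then r* is an eigenvector of B in the Minkowski sense: there exists λ ∈ ℝ such that B r* = λ η r*. -/
open Matrix

/-- Symmetry of the bilinear form of a symmetric matrix. -/
lemma aux_sym (B : Matrix (Fin 4) (Fin 4) ℝ) (hB : B.IsSymm) (a b : Fin 4 → ℝ) :
    a ⬝ᵥ B.mulVec b = b ⬝ᵥ B.mulVec a := by
  rw [Matrix.dotProduct_mulVec, ← Matrix.mulVec_transpose, hB.eq, dotProduct_comm]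

/-- Expansion of the quadratic form along a quadratic curve. -/
lemma aux_expandQ (B : Matrix (Fin 4) (Fin 4) ℝ) (hB : B.IsSymm) (r v c : Fin 4 → ℝ) (t : ℝ) :
    Q B (r + t • v + t ^ 2 • c) =
      Q B r + (2 * (r ⬝ᵥ B.mulVec v)) * t + (v ⬝ᵥ B.mulVec v + 2 * (r ⬝ᵥ B.mulVec c)) * t ^ 2
        + (2 * (v ⬝ᵥ B.mulVec c)) * t ^ 3 + (c ⬝ᵥ B.mulVec c) * t ^ 4 := by
  simp only [Q, Matrix.mulVec_add, Matrix.mulVec_smul, dotProduct_add, add_dotProduct,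
    dotProduct_smul, smul_dotProduct, smul_eq_mul]
  rw [aux_sym B hB v r, aux_sym B hB c r, aux_sym B hB c v]
  ring

/-- A quartic polynomial with no constant term that is everywhere nonnegative
has vanishing linear coefficient. -/
lemma aux_lin_coeff (a b c d : ℝ)
    (h : ∀ t : ℝ, 0 ≤ d * t + c * t ^ 2 + b * t ^ 3 + a * t ^ 4) : d = 0 := by
  have hf : HasDerivAt (fun t : ℝ => d * t + c * t ^ 2 + b * t ^ 3 + a * t ^ 4) d 0 := by
    have h1 := (hasDerivAt_id (0:ℝ)).const_mul d
    have h2 := (hasDerivAt_pow 2 (0:ℝ)).const_mul c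
    have h3 := (hasDerivAt_pow 3 (0:ℝ)).const_mul b
    have h4 := (hasDerivAt_pow 4 (0:ℝ)).const_mul a
    have := ((h1.add h2).add h3).add h4
    simpa [Pi.add_def] using this
  have hmin : IsLocalMin (fun t : ℝ => d * t + c * t ^ 2 + b * t ^ 3 + a * t ^ 4) 0 := by
    apply Filter.Eventually.of_forall
    intro t
    simpa using h t
  exact hmin.hasDerivAt_eq_zero hf

set_option maxHeartbeats 1000000 in
/-- A flat direction of a quartic form nonnegative on the forward lightcone
is a Minkowski eigenvector of B. -/
theorem flat_direction_is_eigenvector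
    (B : Matrix (Fin 4) (Fin 4) ℝ) (hB : B.IsSymm)
    (hnn : ∀ r ∈ LCplus, 0 ≤ Q B r)
    (rstar : Fin 4 → ℝ) (hr : rstar ∈ LCplus) (hne : rstar ≠ 0)
    (hflat : Q B rstar = 0) :
    ∃ lam : ℝ, B.mulVec rstar = lam • eta.mulVec rstar := by
  obtain ⟨h0, hcone⟩ := hr
  set w := B.mulVec rstar with hw
  -- the time component is positive
  have hr0 : 0 < rstar 0 := by
    rcases lt_or_eq_of_le h0 with h | h
    · exact h
    · exfalso
      apply hne
      have hx : (rstar 1) ^ 2 + (rstar 2) ^ 2 + (rstar 3) ^ 2 = 0 := by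
        rw [← hcone, ← h]; ring
      have e1 : rstar 1 = 0 := by nlinarith [sq_nonneg (rstar 1), sq_nonneg (rstar 2), sq_nonneg (rstar 3)]
      have e2 : rstar 2 = 0 := by nlinarith [sq_nonneg (rstar 1), sq_nonneg (rstar 2), sq_nonneg (rstar 3)]
      have e3 : rstar 3 = 0 := by nlinarith [sq_nonneg (rstar 1), sq_nonneg (rstar 2), sq_nonneg (rstar 3)]
      funext i
      fin_cases i
      · show rstar 0 = 0; exact h.symm
      · show rstar 1 = 0; exact e1
      · show rstar 2 = 0; exact e2
      · show rstar 3 = 0; exact e3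
  set μ := (w 1 * rstar 1 + w 2 * rstar 2 + w 3 * rstar 3) / (rstar 0) ^ 2 with hμ
  set v : Fin 4 → ℝ := ![0, w 1 - μ * rstar 1, w 2 - μ * rstar 2, w 3 - μ * rstar 3] with hv
  have hv0 : v 0 = 0 := rfl
  have hv1 : v 1 = w 1 - μ * rstar 1 := rfl
  have hv2 : v 2 = w 2 - μ * rstar 2 := rfl
  have hv3 : v 3 = w 3 - μ * rstar 3 := rfl
  have hr0ne : (rstar 0) ^ 2 ≠ 0 := by positivity
  have hvx : v 1 * rstar 1 + v 2 * rstar 2 + v 3 * rstar 3 = 0 := by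
    rw [hv1, hv2, hv3, hμ]
    field_simp
    linear_combination (w 1 * rstar 1 + w 2 * rstar 2 + w 3 * rstar 3) * hcone
  set α := ((v 1) ^ 2 + (v 2) ^ 2 + (v 3) ^ 2) / (4 * (rstar 0) ^ 2) with hα
  have hα0 : 0 ≤ α := by positivity
  have hαv : (v 1) ^ 2 + (v 2) ^ 2 + (v 3) ^ 2 = 4 * α * (rstar 0) ^ 2 := by
    rw [hα]; field_simp
  set c : Fin 4 → ℝ := ![α * rstar 0, -(α * rstar 1), -(α * rstar 2), -(α * rstar 3)] with hc
  have hc0 : c 0 = α * rstar 0 := rfl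
  have hc1 : c 1 = -(α * rstar 1) := rfl
  have hc2 : c 2 = -(α * rstar 2) := rfl
  have hc3 : c 3 = -(α * rstar 3) := rfl
  -- the curve stays on the lightcone
  have hmem : ∀ t : ℝ, (rstar + t • v + t ^ 2 • c) ∈ LCplus := by
    intro t
    constructor
    · show 0 ≤ rstar 0 + t * v 0 + t ^ 2 * c 0
      rw [hv0, hc0]
      nlinarith [sq_nonneg t, hα0, hr0.le]
    · show (rstar 0 + t * v 0 + t ^ 2 * c 0) ^ 2 =
        (rstar 1 + t * v 1 + t ^ 2 * c 1) ^ 2 + (rstar 2 + t * v 2 + t ^ 2 * c 2) ^ 2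
          + (rstar 3 + t * v 3 + t ^ 2 * c 3) ^ 2
      rw [hv0, hc0, hc1, hc2, hc3]
      linear_combination (1 - α * t ^ 2) ^ 2 * hcone - 2 * t * (1 - α * t ^ 2) * hvx - t ^ 2 * hαv
  -- the linear coefficient vanishes
  have hd : 2 * (rstar ⬝ᵥ B.mulVec v) = 0 := by
    apply aux_lin_coeff (c ⬝ᵥ B.mulVec c) (2 * (v ⬝ᵥ B.mulVec c))
      (v ⬝ᵥ B.mulVec v + 2 * (rstar ⬝ᵥ B.mulVec c))
    intro t
    have := hnn _ (hmem t)
    rw [aux_expandQ B hB rstar v c t, hflat] at this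
    linarith
  have hvw : v 0 * w 0 + v 1 * w 1 + v 2 * w 2 + v 3 * w 3 = 0 := by
    have : rstar ⬝ᵥ B.mulVec v = 0 := by linarith
    rw [aux_sym B hB rstar v, ← hw] at this
    simpa [dotProduct, Fin.sum_univ_four] using this
  -- v = 0
  have hv2sum : (v 1) ^ 2 + (v 2) ^ 2 + (v 3) ^ 2 = 0 := by
    have e1 : w 1 = v 1 + μ * rstar 1 := by rw [hv1]; ring
    have e2 : w 2 = v 2 + μ * rstar 2 := by rw [hv2]; ring
    have e3 : w 3 = v 3 + μ * rstar 3 := by rw [hv3]; ring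
    rw [hv0] at hvw
    linear_combination hvw - μ * hvx - v 1 * e1 - v 2 * e2 - v 3 * e3
  have hz1 : v 1 = 0 := by
    have : (v 1) ^ 2 = 0 := by nlinarith [sq_nonneg (v 2), sq_nonneg (v 3)]
    exact pow_eq_zero_iff (two_ne_zero) |>.mp this
  have hz2 : v 2 = 0 := by
    have : (v 2) ^ 2 = 0 := by nlinarith [sq_nonneg (v 1), sq_nonneg (v 3)]
    exact pow_eq_zero_iff (two_ne_zero) |>.mp this
  have hz3 : v 3 = 0 := by
    have : (v 3) ^ 2 = 0 := by nlinarith [sq_nonneg (v 1), sq_nonneg (v 2)]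
    exact pow_eq_zero_iff (two_ne_zero) |>.mp this
  have hw1 : w 1 = μ * rstar 1 := by rw [hv1] at hz1; linarith
  have hw2 : w 2 = μ * rstar 2 := by rw [hv2] at hz2; linarith
  have hw3 : w 3 = μ * rstar 3 := by rw [hv3] at hz3; linarith
  have hw0 : w 0 = -μ * rstar 0 := by
    have hq : rstar 0 * w 0 + rstar 1 * w 1 + rstar 2 * w 2 + rstar 3 * w 3 = 0 := by
      have := hflat
      simp only [Q, ← hw] at this
      simpa [dotProduct, Fin.sum_univ_four] using this
    rw [hw1, hw2, hw3] at hq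
    have : rstar 0 * (w 0 + μ * rstar 0) = 0 := by linear_combination hq + μ * hcone
    have h2 : w 0 + μ * rstar 0 = 0 := by
      rcases mul_eq_zero.mp this with h' | h'
      · exact absurd h' (ne_of_gt hr0)
      · exact h'
    linarith
  refine ⟨-μ, ?_⟩
  funext i
  fin_cases i <;>
    simp [eta, Matrix.mulVec_diagonal, ← hw, hw0, hw1, hw2, hw3]
end

section
/- Suppose Q(r) > 0 for every nonzero r ∈ LC⁺, and suppose A lies inside the past lightcone: A₀ < 0 and A₀² > A₁² + A₂² + A₃². Then V(r) > 0 = V(0) for every nonzero r ∈ LC⁺ (so the origin is the strict global minimum of V on LC⁺), and there is no nontrivial critical point of V on LC⁺. -/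
open Matrix

/-- Minkowski inner product ⟨x, y⟩ = x₀y₀ − x₁y₁ − x₂y₂ − x₃y₃. -/
def minkDot (x y : Fin 4 → ℝ) : ℝ :=
  x 0 * y 0 - x 1 * y 1 - x 2 * y 2 - x 3 * y 3

/-- The Landau potential. -/
noncomputable def V (B : Matrix (Fin 4) (Fin 4) ℝ) (A : Fin 4 → ℝ) (r : Fin 4 → ℝ) : ℝ :=
  -minkDot A r + (1 / 2) * Q B r

lemma mink_nonpos (A r : Fin 4 → ℝ) (hA0 : A 0 < 0)
    (hApast : (A 1) ^ 2 + (A 2) ^ 2 + (A 3) ^ 2 < (A 0) ^ 2)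
    (hr0 : 0 ≤ r 0) (hcone : (r 0) ^ 2 = (r 1) ^ 2 + (r 2) ^ 2 + (r 3) ^ 2) :
    minkDot A r ≤ 0 := by
  unfold minkDot
  nlinarith [sq_nonneg (A 1 * r 2 - A 2 * r 1), sq_nonneg (A 1 * r 3 - A 3 * r 1),
    sq_nonneg (A 2 * r 3 - A 3 * r 2), sq_nonneg (r 0), sq_nonneg (A 0 * r 0),
    sq_nonneg (A 0 * r 0 + A 1 * r 1 + A 2 * r 2 + A 3 * r 3),
    sq_nonneg (A 0 * r 0 - A 1 * r 1 - A 2 * r 2 - A 3 * r 3),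
    mul_nonneg (neg_nonneg.mpr hA0.le) hr0]

/-- If A lies inside the past lightcone, the origin is the strict global minimum
of the Landau potential on LC⁺ and there is no nontrivial critical point. -/
theorem high_symmetry_phase
    (B : Matrix (Fin 4) (Fin 4) ℝ) (hB : B.IsSymm)
    (hpos : ∀ r ∈ LCplus, r ≠ 0 → 0 < Q B r)
    (A : Fin 4 → ℝ)
    (hA0 : A 0 < 0)
    (hApast : (A 1) ^ 2 + (A 2) ^ 2 + (A 3) ^ 2 < (A 0) ^ 2) :
    (∀ r ∈ LCplus, r ≠ 0 → 0 < V B A r) ∧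
    ¬ ∃ r ∈ LCplus, r ≠ 0 ∧
        ∃ lam : ℝ, B.mulVec r = lam • eta.mulVec r + eta.mulVec A := by
  constructor
  · intro r hr hne
    have hQ := hpos r hr hne
    have hm := mink_nonpos A r hA0 hApast hr.1 hr.2
    unfold V
    linarith
  · rintro ⟨r, hr, hne, lam, hcrit⟩
    have hQ := hpos r hr hne
    have hm := mink_nonpos A r hA0 hApast hr.1 hr.2
    have h := congrArg (fun v => r ⬝ᵥ v) hcrit
    simp only [dotProduct_add, dotProduct_smul, smul_eq_mul] at h
    have hre : r ⬝ᵥ eta.mulVec r = 0 := by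
      have := hr.2
      simp [eta, Matrix.mulVec, dotProduct, Fin.sum_univ_four, Matrix.diagonal]
      nlinarith
    have hrA : r ⬝ᵥ eta.mulVec A = minkDot A r := by
      simp [eta, minkDot, Matrix.mulVec, dotProduct, Fin.sum_univ_four, Matrix.diagonal]
      ring
    have hQr : r ⬝ᵥ B.mulVec r = Q B r := rfl
    rw [hQr, hre, hrA] at h
    simp at h
    linarith
end

section
/- Suppose B₁, B₂, B₃ are pairwise distinct and each is strictly less than B₀, and suppose A₀ > 0 while A₁ = A₂ = A₃ = 0. Then the set of nontrivial critical points of V on LC⁺ consists of exactly six points: for each i ∈ {1, 2, 3}, the two points with r₀ = A₀/(B₀ − Bᵢ), rᵢ = ±r₀, and the other two spatial components equal to zero. -/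
/-- Nontrivial critical points of the Landau potential on LC⁺ in the diagonal
frame: the Lagrange multiplier conditions. -/
def IsCritPt (A₀ A₁ A₂ A₃ B₀ B₁ B₂ B₃ : ℝ) (r : Fin 4 → ℝ) : Prop :=
  r ∈ LCplus ∧ r ≠ 0 ∧
    ∃ lam : ℝ, (B₀ - lam) * r 0 = A₀ ∧ (B₁ - lam) * r 1 = A₁ ∧
      (B₂ - lam) * r 2 = A₂ ∧ (B₃ - lam) * r 3 = A₃

/-- For A aligned with the timelike axis and distinct spacelike eigenvalues,
the potential has exactly six nontrivial critical points. -/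
theorem six_critical_points
    (A₀ B₀ B₁ B₂ B₃ : ℝ)
    (h12 : B₁ ≠ B₂) (h13 : B₁ ≠ B₃) (h23 : B₂ ≠ B₃)
    (h1 : B₁ < B₀) (h2 : B₂ < B₀) (h3 : B₃ < B₀)
    (hA : 0 < A₀) :
    {r : Fin 4 → ℝ | IsCritPt A₀ 0 0 0 B₀ B₁ B₂ B₃ r} =
      {![A₀ / (B₀ - B₁), A₀ / (B₀ - B₁), 0, 0],
       ![A₀ / (B₀ - B₁), -(A₀ / (B₀ - B₁)), 0, 0],
       ![A₀ / (B₀ - B₂), 0, A₀ / (B₀ - B₂), 0],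
       ![A₀ / (B₀ - B₂), 0, -(A₀ / (B₀ - B₂)), 0],
       ![A₀ / (B₀ - B₃), 0, 0, A₀ / (B₀ - B₃)],
       ![A₀ / (B₀ - B₃), 0, 0, -(A₀ / (B₀ - B₃))]} := by
  have hb1 : B₀ - B₁ > 0 := sub_pos.mpr h1
  have hb2 : B₀ - B₂ > 0 := sub_pos.mpr h2
  have hb3 : B₀ - B₃ > 0 := sub_pos.mpr h3
  have hb1' : B₀ - B₁ ≠ 0 := hb1.ne'
  have hb2' : B₀ - B₂ ≠ 0 := hb2.ne'
  have hb3' : B₀ - B₃ ≠ 0 := hb3.ne'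
  have ha1 : 0 < A₀ / (B₀ - B₁) := div_pos hA hb1
  have ha2 : 0 < A₀ / (B₀ - B₂) := div_pos hA hb2
  have ha3 : 0 < A₀ / (B₀ - B₃) := div_pos hA hb3
  ext r
  simp only [Set.mem_setOf_eq, Set.mem_insert_iff, Set.mem_singleton_iff]
  constructor
  · rintro ⟨⟨hr0, hcone⟩, hne, lam, e0, e1, e2, e3⟩
    have hr0ne : r 0 ≠ 0 := by
      intro h
      rw [h, mul_zero] at e0
      exact hA.ne' e0.symm
    have hr0pos : 0 < r 0 := hr0.lt_of_ne (Ne.symm hr0ne)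
    by_cases h1' : r 1 = 0
    · by_cases h2' : r 2 = 0
      · by_cases h3' : r 3 = 0
        · exfalso
          rw [h1', h2', h3'] at hcone
          nlinarith
        · -- λ = B₃ case
          have hl : lam = B₃ := by
            rcases mul_eq_zero.mp e3 with h | h
            · linarith [sub_eq_zero.mp h]
            · exact absurd h h3'
          have hr0v : r 0 = A₀ / (B₀ - B₃) := by
            rw [hl] at e0
            field_simp
            linarith [e0]
          have hsq : (r 3 - r 0) * (r 3 + r 0) = 0 := by
            rw [h1', h2'] at hcone; nlinarith
          rcases mul_eq_zero.mp hsq with h | h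
          · right; right; right; right; left
            have hv : r 3 = A₀ / (B₀ - B₃) := by rw [← hr0v]; linarith [sub_eq_zero.mp h]
            funext i; fin_cases i <;> simp [hr0v, h1', h2', hv]
          · right; right; right; right; right
            have hv : r 3 = -(A₀ / (B₀ - B₃)) := by rw [← hr0v]; linarith
            funext i; fin_cases i <;> simp [hr0v, h1', h2', hv]
      · -- r 2 ≠ 0, so λ = B₂
        have hl : lam = B₂ := by
          rcases mul_eq_zero.mp e2 with h | h
          · linarith [sub_eq_zero.mp h]
          · exact absurd h h2'
        have h3' : r 3 = 0 := by
          rcases mul_eq_zero.mp e3 with h | h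
          · exfalso; rw [hl] at h; exact h23.symm (by linarith [sub_eq_zero.mp h])
          · exact h
        have hr0v : r 0 = A₀ / (B₀ - B₂) := by
          rw [hl] at e0
          field_simp
          linarith [e0]
        have hsq : (r 2 - r 0) * (r 2 + r 0) = 0 := by
          rw [h1', h3'] at hcone; nlinarith
        rcases mul_eq_zero.mp hsq with h | h
        · right; right; left
          have hv : r 2 = A₀ / (B₀ - B₂) := by rw [← hr0v]; linarith [sub_eq_zero.mp h]
          funext i; fin_cases i <;> simp [hr0v, h1', h3', hv]
        · right; right; right; left
          have hv : r 2 = -(A₀ / (B₀ - B₂)) := by rw [← hr0v]; linarith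
          funext i; fin_cases i <;> simp [hr0v, h1', h3', hv]
    · -- r 1 ≠ 0, so λ = B₁
      have hl : lam = B₁ := by
        rcases mul_eq_zero.mp e1 with h | h
        · linarith [sub_eq_zero.mp h]
        · exact absurd h h1'
      have h2' : r 2 = 0 := by
        rcases mul_eq_zero.mp e2 with h | h
        · exfalso; rw [hl] at h; exact h12.symm (by linarith [sub_eq_zero.mp h])
        · exact h
      have h3' : r 3 = 0 := by
        rcases mul_eq_zero.mp e3 with h | h
        · exfalso; rw [hl] at h; exact h13.symm (by linarith [sub_eq_zero.mp h])
        · exact h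
      have hr0v : r 0 = A₀ / (B₀ - B₁) := by
        rw [hl] at e0
        field_simp
        linarith [e0]
      have hsq : (r 1 - r 0) * (r 1 + r 0) = 0 := by
        rw [h2', h3'] at hcone; nlinarith
      rcases mul_eq_zero.mp hsq with h | h
      · left
        have hv : r 1 = A₀ / (B₀ - B₁) := by rw [← hr0v]; linarith [sub_eq_zero.mp h]
        funext i; fin_cases i <;> simp [hr0v, h2', h3', hv]
      · right; left
        have hv : r 1 = -(A₀ / (B₀ - B₁)) := by rw [← hr0v]; linarith
        funext i; fin_cases i <;> simp [hr0v, h2', h3', hv]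
  · intro h
    rcases h with h | h | h | h | h | h <;> subst h
    · exact ⟨⟨by simpa using ha1.le, by simp⟩,
        fun hc => ha1.ne' (by simpa using congrFun hc 0),
        B₁, by simp; field_simp, by simp, by simp, by simp⟩
    · exact ⟨⟨by simpa using ha1.le, by simp⟩,
        fun hc => ha1.ne' (by simpa using congrFun hc 0),
        B₁, by simp; field_simp, by simp, by simp, by simp⟩
    · exact ⟨⟨by simpa using ha2.le, by simp⟩,
        fun hc => ha2.ne' (by simpa using congrFun hc 0),
        B₂, by simp; field_simp, by simp, by simp, by simp⟩
    · exact ⟨⟨by simpa using ha2.le, by simp⟩,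
        fun hc => ha2.ne' (by simpa using congrFun hc 0),
        B₂, by simp; field_simp, by simp, by simp, by simp⟩
    · exact ⟨⟨by simpa using ha3.le, by simp⟩,
        fun hc => ha3.ne' (by simpa using congrFun hc 0),
        B₃, by simp; field_simp, by simp, by simp, by simp⟩
    · exact ⟨⟨by simpa using ha3.le, by simp⟩,
        fun hc => ha3.ne' (by simpa using congrFun hc 0),
        B₃, by simp; field_simp, by simp, by simp, by simp⟩
end

section
/- Suppose B₁, B₂, B₃ are pairwise distinct and each is strictly less than B₀. Then, for any A₀, A₁, A₂, A₃ ∈ ℝ, the set of nontrivial critical points of V on LC⁺ is finite and contains at most six points. -/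
open Polynomial

/-- The resolvent polynomial whose roots contain all Lagrange multipliers. -/
noncomputable def Pcrit (A₀ A₁ A₂ A₃ B₀ B₁ B₂ B₃ : ℝ) : ℝ[X] :=
  C (A₀^2) * ((C B₁ - X) * (C B₂ - X) * (C B₃ - X))^2
  - (C B₀ - X)^2 * (C (A₁^2) * ((C B₂ - X) * (C B₃ - X))^2
      + C (A₂^2) * ((C B₁ - X) * (C B₃ - X))^2
      + C (A₃^2) * ((C B₁ - X) * (C B₂ - X))^2)

lemma Pcrit_eval (A₀ A₁ A₂ A₃ B₀ B₁ B₂ B₃ x : ℝ) :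
    (Pcrit A₀ A₁ A₂ A₃ B₀ B₁ B₂ B₃).eval x =
      A₀^2 * ((B₁ - x) * (B₂ - x) * (B₃ - x))^2
      - (B₀ - x)^2 * (A₁^2 * ((B₂ - x) * (B₃ - x))^2
          + A₂^2 * ((B₁ - x) * (B₃ - x))^2
          + A₃^2 * ((B₁ - x) * (B₂ - x))^2) := by
  simp [Pcrit]

lemma Pcrit_natDegree_le (A₀ A₁ A₂ A₃ B₀ B₁ B₂ B₃ : ℝ) :
    (Pcrit A₀ A₁ A₂ A₃ B₀ B₁ B₂ B₃).natDegree ≤ 6 := by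
  unfold Pcrit
  compute_degree

lemma Pcrit_dvd1 (A₀ A₁ A₂ A₃ B₀ B₁ B₂ B₃ : ℝ) (hA : A₁ = 0) :
    (X - C B₁)^2 ∣ Pcrit A₀ A₁ A₂ A₃ B₀ B₁ B₂ B₃ := by
  refine ⟨C (A₀^2) * ((C B₂ - X) * (C B₃ - X))^2
    - (C B₀ - X)^2 * (C (A₂^2) * (C B₃ - X)^2 + C (A₃^2) * (C B₂ - X)^2), ?_⟩
  subst hA
  simp only [Pcrit, show ((0:ℝ)^2) = 0 by norm_num, map_zero]
  ring

lemma Pcrit_dvd2 (A₀ A₁ A₂ A₃ B₀ B₁ B₂ B₃ : ℝ) (hA : A₂ = 0) :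
    (X - C B₂)^2 ∣ Pcrit A₀ A₁ A₂ A₃ B₀ B₁ B₂ B₃ := by
  refine ⟨C (A₀^2) * ((C B₁ - X) * (C B₃ - X))^2
    - (C B₀ - X)^2 * (C (A₁^2) * (C B₃ - X)^2 + C (A₃^2) * (C B₁ - X)^2), ?_⟩
  subst hA
  simp only [Pcrit, show ((0:ℝ)^2) = 0 by norm_num, map_zero]
  ring

lemma Pcrit_dvd3 (A₀ A₁ A₂ A₃ B₀ B₁ B₂ B₃ : ℝ) (hA : A₃ = 0) :
    (X - C B₃)^2 ∣ Pcrit A₀ A₁ A₂ A₃ B₀ B₁ B₂ B₃ := by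
  refine ⟨C (A₀^2) * ((C B₁ - X) * (C B₂ - X))^2
    - (C B₀ - X)^2 * (C (A₁^2) * (C B₂ - X)^2 + C (A₂^2) * (C B₁ - X)^2), ?_⟩
  subst hA
  simp only [Pcrit, show ((0:ℝ)^2) = 0 by norm_num, map_zero]
  ring

lemma crit_pos {A₀ A₁ A₂ A₃ B₀ B₁ B₂ B₃ : ℝ} {r : Fin 4 → ℝ}
    (h : IsCritPt A₀ A₁ A₂ A₃ B₀ B₁ B₂ B₃ r) : 0 < r 0 := by
  obtain ⟨⟨h0, hc⟩, hne, -⟩ := h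
  rcases h0.lt_or_eq with h|h
  · exact h
  · exfalso
    apply hne
    have h1 : (r 1) ^ 2 = 0 := by nlinarith [sq_nonneg (r 2), sq_nonneg (r 3)]
    have h2 : (r 2) ^ 2 = 0 := by nlinarith [sq_nonneg (r 1), sq_nonneg (r 3)]
    have h3 : (r 3) ^ 2 = 0 := by nlinarith [sq_nonneg (r 1), sq_nonneg (r 2)]
    have e1 : r 1 = 0 := pow_eq_zero_iff two_ne_zero |>.mp h1
    have e2 : r 2 = 0 := pow_eq_zero_iff two_ne_zero |>.mp h2
    have e3 : r 3 = 0 := pow_eq_zero_iff two_ne_zero |>.mp h3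
    funext i
    fin_cases i <;> simp only [Pi.zero_apply]
    · exact h.symm
    · exact e1
    · exact e2
    · exact e3

/-- A critical point satisfies the equations with the canonical multiplier. -/
lemma crit_eqs {A₀ A₁ A₂ A₃ B₀ B₁ B₂ B₃ : ℝ} {r : Fin 4 → ℝ}
    (h : IsCritPt A₀ A₁ A₂ A₃ B₀ B₁ B₂ B₃ r) :
    0 < r 0 ∧ (r 0)^2 = (r 1)^2 + (r 2)^2 + (r 3)^2 ∧
    (B₀ - (B₀ - A₀ / r 0)) * r 0 = A₀ ∧ (B₁ - (B₀ - A₀ / r 0)) * r 1 = A₁ ∧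
    (B₂ - (B₀ - A₀ / r 0)) * r 2 = A₂ ∧ (B₃ - (B₀ - A₀ / r 0)) * r 3 = A₃ := by
  have hpos : 0 < r 0 := crit_pos h
  obtain ⟨⟨h0, hc⟩, hne, lam, e0, e1, e2, e3⟩ := h
  have hr0 : r 0 ≠ 0 := hpos.ne'
  have hlam : lam = B₀ - A₀ / r 0 := by
    field_simp
    linear_combination -e0
  refine ⟨hpos, hc, ?_, ?_, ?_, ?_⟩ <;> rw [← hlam] <;> assumption

/-- The set of nontrivial critical points is finite, with at most six elements. -/
theorem at_most_six_critical_points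
    (A₀ A₁ A₂ A₃ B₀ B₁ B₂ B₃ : ℝ)
    (h12 : B₁ ≠ B₂) (h13 : B₁ ≠ B₃) (h23 : B₂ ≠ B₃)
    (h1 : B₁ < B₀) (h2 : B₂ < B₀) (h3 : B₃ < B₀) :
    {r : Fin 4 → ℝ | IsCritPt A₀ A₁ A₂ A₃ B₀ B₁ B₂ B₃ r}.Finite ∧
    {r : Fin 4 → ℝ | IsCritPt A₀ A₁ A₂ A₃ B₀ B₁ B₂ B₃ r}.ncard ≤ 6 := by
  classical
  set S := {r : Fin 4 → ℝ | IsCritPt A₀ A₁ A₂ A₃ B₀ B₁ B₂ B₃ r} with hSdef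
  by_cases hA : A₀ = 0 ∧ A₁ = 0 ∧ A₂ = 0 ∧ A₃ = 0
  · -- all coefficients zero: no critical points
    obtain ⟨hA0, hA1, hA2, hA3⟩ := hA
    have hempty : S = ∅ := by
      ext r
      simp only [hSdef, Set.mem_setOf_eq, Set.mem_empty_iff_false, iff_false]
      intro h
      have hpos : 0 < r 0 := crit_pos h
      obtain ⟨⟨h0, hc⟩, hne, lam, e0, e1, e2, e3⟩ := h
      rw [hA0] at e0
      have hlam : lam = B₀ := by
        rcases mul_eq_zero.mp e0 with h | h
        · linarith [sub_eq_zero.mp h]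
        · exact absurd h hpos.ne'
      subst hlam
      rw [hA1] at e1; rw [hA2] at e2; rw [hA3] at e3
      have hr1 : r 1 = 0 := by
        rcases mul_eq_zero.mp e1 with h | h
        · exact absurd (sub_eq_zero.mp h) h1.ne
        · exact h
      have hr2 : r 2 = 0 := by
        rcases mul_eq_zero.mp e2 with h | h
        · exact absurd (sub_eq_zero.mp h) h2.ne
        · exact h
      have hr3 : r 3 = 0 := by
        rcases mul_eq_zero.mp e3 with h | h
        · exact absurd (sub_eq_zero.mp h) h3.ne
        · exact h
      rw [hr1, hr2, hr3] at hc
      nlinarith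
    rw [hempty]
    simp
  · -- some coefficient nonzero: the resolvent polynomial is nonzero
    set P := Pcrit A₀ A₁ A₂ A₃ B₀ B₁ B₂ B₃ with hPdef
    have hPne : P ≠ 0 := by
      by_cases h0 : A₀ = 0
      · by_cases ha1 : A₁ = 0
        · by_cases ha2 : A₂ = 0
          · have ha3 : A₃ ≠ 0 := fun h => hA ⟨h0, ha1, ha2, h⟩
            intro h
            have := Pcrit_eval A₀ A₁ A₂ A₃ B₀ B₁ B₂ B₃ B₃
            rw [← hPdef, h] at this
            simp only [eval_zero] at this
            have hb0 : B₀ - B₃ ≠ 0 := sub_ne_zero.mpr h3.ne'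
            have hb1 : B₁ - B₃ ≠ 0 := sub_ne_zero.mpr h13
            have hb2 : B₂ - B₃ ≠ 0 := sub_ne_zero.mpr h23
            rw [h0, ha1, ha2] at this
            have : (B₀ - B₃)^2 * (A₃^2 * ((B₁ - B₃) * (B₂ - B₃))^2) = 0 := by
              linear_combination this
            exact (mul_ne_zero (pow_ne_zero 2 hb0) (mul_ne_zero (pow_ne_zero 2 ha3)
              (pow_ne_zero 2 (mul_ne_zero hb1 hb2)))) this
          · intro h
            have := Pcrit_eval A₀ A₁ A₂ A₃ B₀ B₁ B₂ B₃ B₂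
            rw [← hPdef, h] at this
            simp only [eval_zero] at this
            have hb0 : B₀ - B₂ ≠ 0 := sub_ne_zero.mpr h2.ne'
            have hb1 : B₁ - B₂ ≠ 0 := sub_ne_zero.mpr h12
            have hb3 : B₃ - B₂ ≠ 0 := sub_ne_zero.mpr h23.symm
            rw [h0, ha1] at this
            have : (B₀ - B₂)^2 * (A₂^2 * ((B₁ - B₂) * (B₃ - B₂))^2) = 0 := by
              linear_combination this
            exact (mul_ne_zero (pow_ne_zero 2 hb0) (mul_ne_zero (pow_ne_zero 2 ha2)
              (pow_ne_zero 2 (mul_ne_zero hb1 hb3)))) this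
        · intro h
          have := Pcrit_eval A₀ A₁ A₂ A₃ B₀ B₁ B₂ B₃ B₁
          rw [← hPdef, h] at this
          simp only [eval_zero] at this
          have hb0 : B₀ - B₁ ≠ 0 := sub_ne_zero.mpr h1.ne'
          have hb2 : B₂ - B₁ ≠ 0 := sub_ne_zero.mpr h12.symm
          have hb3 : B₃ - B₁ ≠ 0 := sub_ne_zero.mpr h13.symm
          rw [h0] at this
          have : (B₀ - B₁)^2 * (A₁^2 * ((B₂ - B₁) * (B₃ - B₁))^2) = 0 := by
            linear_combination this
          exact (mul_ne_zero (pow_ne_zero 2 hb0) (mul_ne_zero (pow_ne_zero 2 ha1)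
            (pow_ne_zero 2 (mul_ne_zero hb2 hb3)))) this
      · intro h
        have := Pcrit_eval A₀ A₁ A₂ A₃ B₀ B₁ B₂ B₃ B₀
        rw [← hPdef, h] at this
        simp only [eval_zero] at this
        have hb1 : B₁ - B₀ ≠ 0 := sub_ne_zero.mpr h1.ne
        have hb2 : B₂ - B₀ ≠ 0 := sub_ne_zero.mpr h2.ne
        have hb3 : B₃ - B₀ ≠ 0 := sub_ne_zero.mpr h3.ne
        have : A₀^2 * ((B₁ - B₀) * (B₂ - B₀) * (B₃ - B₀))^2 = 0 := by
          linear_combination -this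
        exact (mul_ne_zero (pow_ne_zero 2 h0)
          (pow_ne_zero 2 (mul_ne_zero (mul_ne_zero hb1 hb2) hb3))) this
    -- every critical point gives a root of P
    have hroot : ∀ r ∈ S, (B₀ - A₀ / r 0) ∈ P.roots := by
      intro r hr
      obtain ⟨hpos, hc, e0, e1, e2, e3⟩ := crit_eqs hr
      rw [mem_roots hPne]
      show P.eval (B₀ - A₀ / r 0) = 0
      rw [hPdef, Pcrit_eval]
      set x := B₀ - A₀ / r 0 with hx
      linear_combination
        (-(A₀ + (B₀ - x) * r 0) * ((B₁ - x) * (B₂ - x) * (B₃ - x))^2) * e0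
        + ((B₀ - x)^2 * ((B₂ - x) * (B₃ - x))^2 * (A₁ + (B₁ - x) * r 1)) * e1
        + ((B₀ - x)^2 * ((B₁ - x) * (B₃ - x))^2 * (A₂ + (B₂ - x) * r 2)) * e2
        + ((B₀ - x)^2 * ((B₁ - x) * (B₂ - x))^2 * (A₃ + (B₃ - x) * r 3)) * e3
        + ((B₀ - x) * (B₁ - x) * (B₂ - x) * (B₃ - x))^2 * hc
    -- fibers of the multiplier map are small
    have fib : ∀ l : ℝ, {r ∈ S | B₀ - A₀ / r 0 = l}.Finite ∧
        {r ∈ S | B₀ - A₀ / r 0 = l}.ncard ≤ P.roots.count l := by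
      intro l
      set T := {r ∈ S | B₀ - A₀ / r 0 = l} with hTdef
      rcases T.eq_empty_or_nonempty with hT | ⟨r, hrS, hrl⟩
      · rw [hT]; simp
      -- facts about the base point r
      obtain ⟨hpos, hc, e0, e1, e2, e3⟩ := crit_eqs hrS
      rw [hrl] at e0 e1 e2 e3
      have hlmem : l ∈ P.roots := hrl ▸ hroot r hrS
      -- generic coordinate equality for any point in the fiber
      have hcoord : ∀ r' ∈ T, (r' 0 > 0) ∧ ((r' 0)^2 = (r' 1)^2 + (r' 2)^2 + (r' 3)^2) ∧
          ((B₀ - l) * r' 0 = A₀) ∧ ((B₁ - l) * r' 1 = A₁) ∧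
          ((B₂ - l) * r' 2 = A₂) ∧ ((B₃ - l) * r' 3 = A₃) := by
        intro r' ⟨hr'S, hr'l⟩
        obtain ⟨hpos', hc', e0', e1', e2', e3'⟩ := crit_eqs hr'S
        rw [hr'l] at e0' e1' e2' e3'
        exact ⟨hpos', hc', e0', e1', e2', e3'⟩
      have hr0eq : ∀ r' ∈ T, B₀ ≠ l → r' 0 = r 0 := by
        intro r' hr' hB
        obtain ⟨-, -, e0', -, -, -⟩ := hcoord r' hr'
        have := e0'.trans e0.symm
        exact mul_left_cancel₀ (sub_ne_zero.mpr hB) this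
      by_cases hl1 : l = B₁
      · -- degenerate fiber at B₁: at most two points, double root
        have hA1 : A₁ = 0 := by rw [← e1, hl1]; ring
        have hcount : 2 ≤ P.roots.count l := by
          rw [P.count_roots, hl1]
          exact (le_rootMultiplicity_iff hPne).mpr (Pcrit_dvd1 A₀ A₁ A₂ A₃ B₀ B₁ B₂ B₃ hA1)
        have hsub : T ⊆ {r, Function.update r 1 (-(r 1))} := by
          intro r' hr'
          obtain ⟨hpos', hc', e0', e1', e2', e3'⟩ := hcoord r' hr'
          have h0' : r' 0 = r 0 := hr0eq r' hr' (by rw [hl1]; exact h1.ne')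
          have h2' : r' 2 = r 2 :=
            mul_left_cancel₀ (sub_ne_zero.mpr (hl1 ▸ h12.symm : B₂ ≠ l)) (e2'.trans e2.symm)
          have h3' : r' 3 = r 3 :=
            mul_left_cancel₀ (sub_ne_zero.mpr (hl1 ▸ h13.symm : B₃ ≠ l)) (e3'.trans e3.symm)
          have hsq : (r' 1)^2 = (r 1)^2 := by
            rw [h0', h2', h3'] at hc'
            linarith
          rcases sq_eq_sq_iff_eq_or_eq_neg.mp hsq with h | h
          · left
            funext i
            fin_cases i
            · exact h0'
            · exact h
            · exact h2'
            · exact h3'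
          · right
            funext i
            fin_cases i <;> simp only [Function.update]
            · simpa using h0'
            · simpa using h
            · simpa using h2'
            · simpa using h3'
        have hfin : T.Finite :=
          Set.Finite.subset (Set.Finite.insert _ (Set.finite_singleton _)) hsub
        refine ⟨hfin, le_trans ?_ hcount⟩
        calc T.ncard ≤ ({r, Function.update r 1 (-(r 1))} : Set (Fin 4 → ℝ)).ncard :=
              Set.ncard_le_ncard hsub (Set.Finite.insert _ (Set.finite_singleton _))
          _ ≤ 2 := by
              refine le_trans (Set.ncard_insert_le _ _) ?_
              simp [Set.ncard_singleton]
      · by_cases hl2 : l = B₂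
        · have hA2 : A₂ = 0 := by rw [← e2, hl2]; ring
          have hcount : 2 ≤ P.roots.count l := by
            rw [P.count_roots, hl2]
            exact (le_rootMultiplicity_iff hPne).mpr (Pcrit_dvd2 A₀ A₁ A₂ A₃ B₀ B₁ B₂ B₃ hA2)
          have hsub : T ⊆ {r, Function.update r 2 (-(r 2))} := by
            intro r' hr'
            obtain ⟨hpos', hc', e0', e1', e2', e3'⟩ := hcoord r' hr'
            have h0' : r' 0 = r 0 := hr0eq r' hr' (by rw [hl2]; exact h2.ne')
            have h1' : r' 1 = r 1 :=
              mul_left_cancel₀ (sub_ne_zero.mpr (hl2 ▸ h12 : B₁ ≠ l)) (e1'.trans e1.symm)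
            have h3' : r' 3 = r 3 :=
              mul_left_cancel₀ (sub_ne_zero.mpr (hl2 ▸ h23.symm : B₃ ≠ l)) (e3'.trans e3.symm)
            have hsq : (r' 2)^2 = (r 2)^2 := by
              rw [h0', h1', h3'] at hc'
              linarith
            rcases sq_eq_sq_iff_eq_or_eq_neg.mp hsq with h | h
            · left
              funext i
              fin_cases i
              · exact h0'
              · exact h1'
              · exact h
              · exact h3'
            · right
              funext i
              fin_cases i <;> simp only [Function.update]
              · simpa using h0'
              · simpa using h1'
              · simpa using h
              · simpa using h3'
          have hfin : T.Finite :=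
            Set.Finite.subset (Set.Finite.insert _ (Set.finite_singleton _)) hsub
          refine ⟨hfin, le_trans ?_ hcount⟩
          calc T.ncard ≤ ({r, Function.update r 2 (-(r 2))} : Set (Fin 4 → ℝ)).ncard :=
                Set.ncard_le_ncard hsub (Set.Finite.insert _ (Set.finite_singleton _))
            _ ≤ 2 := by
                refine le_trans (Set.ncard_insert_le _ _) ?_
                simp [Set.ncard_singleton]
        · by_cases hl3 : l = B₃
          · have hA3 : A₃ = 0 := by rw [← e3, hl3]; ring
            have hcount : 2 ≤ P.roots.count l := by
              rw [P.count_roots, hl3]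
              exact (le_rootMultiplicity_iff hPne).mpr (Pcrit_dvd3 A₀ A₁ A₂ A₃ B₀ B₁ B₂ B₃ hA3)
            have hsub : T ⊆ {r, Function.update r 3 (-(r 3))} := by
              intro r' hr'
              obtain ⟨hpos', hc', e0', e1', e2', e3'⟩ := hcoord r' hr'
              have h0' : r' 0 = r 0 := hr0eq r' hr' (by rw [hl3]; exact h3.ne')
              have h1' : r' 1 = r 1 :=
                mul_left_cancel₀ (sub_ne_zero.mpr (hl3 ▸ h13 : B₁ ≠ l)) (e1'.trans e1.symm)
              have h2' : r' 2 = r 2 :=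
                mul_left_cancel₀ (sub_ne_zero.mpr (hl3 ▸ h23 : B₂ ≠ l)) (e2'.trans e2.symm)
              have hsq : (r' 3)^2 = (r 3)^2 := by
                rw [h0', h1', h2'] at hc'
                linarith
              rcases sq_eq_sq_iff_eq_or_eq_neg.mp hsq with h | h
              · left
                funext i
                fin_cases i
                · exact h0'
                · exact h1'
                · exact h2'
                · exact h
              · right
                funext i
                fin_cases i <;> simp only [Function.update]
                · simpa using h0'
                · simpa using h1'
                · simpa using h2'
                · simpa using h
            have hfin : T.Finite :=
              Set.Finite.subset (Set.Finite.insert _ (Set.finite_singleton _)) hsub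
            refine ⟨hfin, le_trans ?_ hcount⟩
            calc T.ncard ≤ ({r, Function.update r 3 (-(r 3))} : Set (Fin 4 → ℝ)).ncard :=
                  Set.ncard_le_ncard hsub (Set.Finite.insert _ (Set.finite_singleton _))
              _ ≤ 2 := by
                  refine le_trans (Set.ncard_insert_le _ _) ?_
                  simp [Set.ncard_singleton]
          · -- nondegenerate fiber: exactly one point
            have hcount : 1 ≤ P.roots.count l := Multiset.one_le_count_iff_mem.mpr hlmem
            have hsub : T ⊆ {r} := by
              intro r' hr'
              obtain ⟨hpos', hc', e0', e1', e2', e3'⟩ := hcoord r' hr'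
              have h1' : r' 1 = r 1 :=
                mul_left_cancel₀ (sub_ne_zero.mpr (fun h => hl1 h.symm)) (e1'.trans e1.symm)
              have h2' : r' 2 = r 2 :=
                mul_left_cancel₀ (sub_ne_zero.mpr (fun h => hl2 h.symm)) (e2'.trans e2.symm)
              have h3' : r' 3 = r 3 :=
                mul_left_cancel₀ (sub_ne_zero.mpr (fun h => hl3 h.symm)) (e3'.trans e3.symm)
              have hsq : (r' 0)^2 = (r 0)^2 := by
                rw [h1', h2', h3'] at hc'
                linarith
              have h0' : r' 0 = r 0 := (pow_left_inj₀ hpos'.le hpos.le two_ne_zero).mp hsq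
              have : r' = r := by
                funext i
                fin_cases i
                · exact h0'
                · exact h1'
                · exact h2'
                · exact h3'
              simp [this]
            have hfin : T.Finite := Set.Finite.subset (Set.finite_singleton _) hsub
            refine ⟨hfin, le_trans ?_ hcount⟩
            calc T.ncard ≤ ({r} : Set (Fin 4 → ℝ)).ncard :=
                  Set.ncard_le_ncard hsub (Set.finite_singleton _)
              _ = 1 := Set.ncard_singleton _
    -- assemble: S is covered by the fibers over the roots
    let F : ℝ → Finset (Fin 4 → ℝ) := fun l => (fib l).1.toFinset
    have hsubS : S ⊆ ↑(P.roots.toFinset.biUnion F) := by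
      intro r hr
      simp only [Finset.coe_biUnion, Set.mem_iUnion, Finset.mem_coe, Multiset.mem_toFinset]
      exact ⟨B₀ - A₀ / r 0, hroot r hr, (fib _).1.mem_toFinset.mpr ⟨hr, rfl⟩⟩
    have hfinS : S.Finite := Set.Finite.subset (Finset.finite_toSet _) hsubS
    refine ⟨hfinS, ?_⟩
    calc S.ncard ≤ (P.roots.toFinset.biUnion F).card := by
          rw [← Set.ncard_coe_finset]
          exact Set.ncard_le_ncard hsubS (Finset.finite_toSet _)
      _ ≤ ∑ l ∈ P.roots.toFinset, (F l).card := Finset.card_biUnion_le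
      _ ≤ ∑ l ∈ P.roots.toFinset, P.roots.count l := by
          refine Finset.sum_le_sum fun l _ => ?_
          rw [show (F l).card = {r ∈ S | B₀ - A₀ / r 0 = l}.ncard from
            (Set.ncard_eq_toFinset_card _ (fib l).1).symm]
          exact (fib l).2
      _ = Multiset.card P.roots := P.roots.toFinset_sum_count_eq
      _ ≤ P.natDegree := P.card_roots'
      _ ≤ 6 := Pcrit_natDegree_le A₀ A₁ A₂ A₃ B₀ B₁ B₂ B₃
end

section
/- Suppose B₀ > Bᵢ for each i ∈ {1, 2, 3}, and suppose the vector A lies inside the future lightcone: A₀ > 0 and A₀² > A₁² + A₂² + A₃². Then V has at least two distinct nontrivial critical points on LC⁺. -/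
open Filter Topology Set

/-- The key scalar function whose zeros give critical points. -/
noncomputable def hfun (A₀ A₁ A₂ A₃ B₀ B₁ B₂ B₃ l : ℝ) : ℝ :=
  A₀^2/(B₀-l)^2 - A₁^2/(B₁-l)^2 - A₂^2/(B₂-l)^2 - A₃^2/(B₃-l)^2

lemma cont_term {A B : ℝ} {s : Set ℝ} (hs : A ≠ 0 → ∀ l ∈ s, B - l ≠ 0) :
    ContinuousOn (fun l => A^2/(B-l)^2) s := by
  by_cases hA : A = 0
  · simp only [hA, ne_eq, OfNat.ofNat_ne_zero, not_false_eq_true, zero_pow, zero_div]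
    exact continuousOn_const
  · exact ContinuousOn.div continuousOn_const
      (((continuous_const.sub continuous_id).pow 2).continuousOn)
      fun l hl => pow_ne_zero 2 (hs hA l hl)

lemma tendsto_term_atTop {A B : ℝ} (hA : A ≠ 0) :
    Tendsto (fun l => A^2/(B-l)^2) (𝓝[≠] B) atTop := by
  have h1 : Tendsto (fun l : ℝ => (B-l)^2) (𝓝[≠] B) (𝓝[>] 0) := by
    apply tendsto_nhdsWithin_of_tendsto_nhds_of_eventually_within
    · have hc : Continuous (fun l : ℝ => (B - l)^2) := by continuity
      have h0 := (hc.tendsto B).mono_left (nhdsWithin_le_nhds : 𝓝[≠] B ≤ 𝓝 B)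
      simpa using h0
    · filter_upwards [self_mem_nhdsWithin] with l hl
      have hne : B - l ≠ 0 := sub_ne_zero.mpr (Ne.symm hl)
      exact mem_Ioi.mpr (by positivity)
  have h2 := h1.inv_tendsto_nhdsGT_zero
  have h3 := h2.const_mul_atTop (show (0:ℝ) < A^2 by positivity)
  simpa [div_eq_mul_inv] using h3

lemma tendsto_term_nhds {A B x : ℝ} (hBx : B ≠ x) :
    Tendsto (fun l => A^2/(B-l)^2) (𝓝 x) (𝓝 (A^2/(B-x)^2)) :=
  Tendsto.div tendsto_const_nhds
    (((continuous_const.sub continuous_id).pow 2).tendsto x)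
    (pow_ne_zero 2 (sub_ne_zero.mpr hBx))

lemma ivt_Ioo {p q : ℝ} (hpq : p < q) {h : ℝ → ℝ}
    (hcont : ContinuousOn h (Ioo p q))
    (hbot : Tendsto h (𝓝[>] p) atBot) (htop : Tendsto h (𝓝[<] q) atTop) :
    ∃ lam ∈ Ioo p q, h lam = 0 := by
  have hne1 : (𝓝[Ioo p q] p).NeBot := left_nhdsWithin_Ioo_neBot hpq
  have hne2 : (𝓝[Ioo p q] q).NeBot := right_nhdsWithin_Ioo_neBot hpq
  obtain ⟨a, ha, hha⟩ : ∃ a, a ∈ Ioo p q ∧ h a < 0 := by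
    have h1 : ∀ᶠ l in 𝓝[Ioo p q] p, h l < 0 :=
      (hbot.mono_left (nhdsWithin_mono _ Ioo_subset_Ioi_self)).eventually_lt_atBot 0
    exact (eventually_mem_nhdsWithin.and h1).exists
  obtain ⟨b, hb, hhb⟩ : ∃ b, b ∈ Ioo p q ∧ 0 < h b := by
    have h1 : ∀ᶠ l in 𝓝[Ioo p q] q, 0 < h l :=
      (htop.mono_left (nhdsWithin_mono _ Ioo_subset_Iio_self)).eventually_gt_atTop 0
    exact (eventually_mem_nhdsWithin.and h1).exists
  have hsub : uIcc a b ⊆ Ioo p q := (ordConnected_Ioo).uIcc_subset ha hb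
  have h0 : (0:ℝ) ∈ uIcc (h a) (h b) := Icc_subset_uIcc ⟨hha.le, hhb.le⟩
  obtain ⟨lam, hlam, hl0⟩ := intermediate_value_uIcc (hcont.mono hsub) h0
  exact ⟨lam, hsub hlam, hl0⟩

lemma ivt_Iio {p : ℝ} {h : ℝ → ℝ} (hcont : ContinuousOn h (Iio p))
    (hpos : ∀ᶠ l in atBot, 0 < h l) (hbot : Tendsto h (𝓝[<] p) atBot) :
    ∃ lam < p, h lam = 0 := by
  obtain ⟨b, hb, hhb⟩ : ∃ b, b ∈ Iio p ∧ h b < 0 := by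
    have h1 : ∀ᶠ l in 𝓝[<] p, h l < 0 := hbot.eventually_lt_atBot 0
    exact (eventually_mem_nhdsWithin.and h1).exists
  obtain ⟨a, ha, hha⟩ : ∃ a, a ∈ Iio p ∧ 0 < h a := by
    have h2 : ∀ᶠ l in atBot, l ∈ Iio p := eventually_lt_atBot p
    exact (h2.and hpos).exists
  have hsub : uIcc a b ⊆ Iio p := (ordConnected_Iio).uIcc_subset ha hb
  have h0 : (0:ℝ) ∈ uIcc (h a) (h b) := Icc_subset_uIcc' ⟨hhb.le, hha.le⟩
  obtain ⟨lam, hlam, hl0⟩ := intermediate_value_uIcc (hcont.mono hsub) h0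
  exact ⟨lam, hsub hlam, hl0⟩

lemma hfun_le_bound (A₀ A₁ A₂ A₃ B₀ B₁ B₂ B₃ : ℝ) (l : ℝ) :
    hfun A₀ A₁ A₂ A₃ B₀ B₁ B₂ B₃ l ≤ A₀^2/(B₀-l)^2 - A₁^2/(B₁-l)^2 ∧
    hfun A₀ A₁ A₂ A₃ B₀ B₁ B₂ B₃ l ≤ A₀^2/(B₀-l)^2 - A₂^2/(B₂-l)^2 ∧
    hfun A₀ A₁ A₂ A₃ B₀ B₁ B₂ B₃ l ≤ A₀^2/(B₀-l)^2 - A₃^2/(B₃-l)^2 := by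
  have t1 : 0 ≤ A₁^2/(B₁-l)^2 := by positivity
  have t2 : 0 ≤ A₂^2/(B₂-l)^2 := by positivity
  have t3 : 0 ≤ A₃^2/(B₃-l)^2 := by positivity
  unfold hfun
  refine ⟨by linarith, by linarith, by linarith⟩

/-- Near a realized pole `p ≠ B₀`, `hfun → -∞`. -/
lemma tendsto_pole {A₀ A₁ A₂ A₃ B₀ B₁ B₂ B₃ p : ℝ} (hpB0 : B₀ ≠ p)
    (hreal : (A₁ ≠ 0 ∧ B₁ = p) ∨ (A₂ ≠ 0 ∧ B₂ = p) ∨ (A₃ ≠ 0 ∧ B₃ = p)) :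
    Tendsto (hfun A₀ A₁ A₂ A₃ B₀ B₁ B₂ B₃) (𝓝[≠] p) atBot := by
  have hfin : Tendsto (fun l => A₀^2/(B₀-l)^2) (𝓝[≠] p) (𝓝 (A₀^2/(B₀-p)^2)) :=
    (tendsto_term_nhds hpB0).mono_left nhdsWithin_le_nhds
  rcases hreal with ⟨hA, hB⟩ | ⟨hA, hB⟩ | ⟨hA, hB⟩
  · subst hB
    refine tendsto_atBot_mono (fun l => (hfun_le_bound A₀ A₁ A₂ A₃ B₀ B₁ B₂ B₃ l).1) ?_
    simpa [sub_eq_add_neg] using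
      hfin.add_atBot (tendsto_neg_atTop_atBot.comp (tendsto_term_atTop hA))
  · subst hB
    refine tendsto_atBot_mono (fun l => (hfun_le_bound A₀ A₁ A₂ A₃ B₀ B₁ B₂ B₃ l).2.1) ?_
    simpa [sub_eq_add_neg] using
      hfin.add_atBot (tendsto_neg_atTop_atBot.comp (tendsto_term_atTop hA))
  · subst hB
    refine tendsto_atBot_mono (fun l => (hfun_le_bound A₀ A₁ A₂ A₃ B₀ B₁ B₂ B₃ l).2.2) ?_
    simpa [sub_eq_add_neg] using
      hfin.add_atBot (tendsto_neg_atTop_atBot.comp (tendsto_term_atTop hA))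

lemma upper_root {A₀ A₁ A₂ A₃ B₀ B₁ B₂ B₃ p : ℝ} (hA0 : 0 < A₀)
    (h1 : B₁ < B₀) (h2 : B₂ < B₀) (h3 : B₃ < B₀) (hp : p < B₀)
    (hub1 : A₁ ≠ 0 → B₁ ≤ p) (hub2 : A₂ ≠ 0 → B₂ ≤ p) (hub3 : A₃ ≠ 0 → B₃ ≤ p)
    (hreal : (A₁ ≠ 0 ∧ B₁ = p) ∨ (A₂ ≠ 0 ∧ B₂ = p) ∨ (A₃ ≠ 0 ∧ B₃ = p)) :
    ∃ lam, p < lam ∧ lam < B₀ ∧ hfun A₀ A₁ A₂ A₃ B₀ B₁ B₂ B₃ lam = 0 := by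
  have hcont : ContinuousOn (hfun A₀ A₁ A₂ A₃ B₀ B₁ B₂ B₃) (Ioo p B₀) := by
    unfold hfun
    refine (((cont_term ?_).sub (cont_term ?_)).sub (cont_term ?_)).sub (cont_term ?_)
    · exact fun _ l hl => sub_ne_zero.mpr (ne_of_gt hl.2)
    · exact fun hA l hl => sub_ne_zero.mpr (ne_of_lt (lt_of_le_of_lt (hub1 hA) hl.1))
    · exact fun hA l hl => sub_ne_zero.mpr (ne_of_lt (lt_of_le_of_lt (hub2 hA) hl.1))
    · exact fun hA l hl => sub_ne_zero.mpr (ne_of_lt (lt_of_le_of_lt (hub3 hA) hl.1))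
  have htop : Tendsto (hfun A₀ A₁ A₂ A₃ B₀ B₁ B₂ B₃) (𝓝[<] B₀) atTop := by
    have heq : hfun A₀ A₁ A₂ A₃ B₀ B₁ B₂ B₃ = fun l =>
        A₀^2/(B₀-l)^2 + (-(A₁^2/(B₁-l)^2) + (-(A₂^2/(B₂-l)^2) + -(A₃^2/(B₃-l)^2))) := by
      funext l; unfold hfun; ring
    rw [heq]
    have htail : Tendsto (fun l => -(A₁^2/(B₁-l)^2) + (-(A₂^2/(B₂-l)^2) + -(A₃^2/(B₃-l)^2)))
        (𝓝[<] B₀) (𝓝 (-(A₁^2/(B₁-B₀)^2) + (-(A₂^2/(B₂-B₀)^2) + -(A₃^2/(B₃-B₀)^2)))) :=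
      Tendsto.add ((tendsto_term_nhds h1.ne).mono_left nhdsWithin_le_nhds).neg
        (Tendsto.add ((tendsto_term_nhds h2.ne).mono_left nhdsWithin_le_nhds).neg
          ((tendsto_term_nhds h3.ne).mono_left nhdsWithin_le_nhds).neg)
    exact Filter.Tendsto.atTop_add ((tendsto_term_atTop hA0.ne').mono_left
        (nhdsWithin_mono _ fun x hx => ne_of_lt hx)) htail
  have hbot : Tendsto (hfun A₀ A₁ A₂ A₃ B₀ B₁ B₂ B₃) (𝓝[>] p) atBot :=
    (tendsto_pole (ne_of_gt hp) hreal).mono_left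
      (nhdsWithin_mono _ fun x hx => ne_of_gt hx)
  obtain ⟨lam, hlam, h0⟩ := ivt_Ioo hp hcont hbot htop
  exact ⟨lam, hlam.1, hlam.2, h0⟩

lemma lower_root {A₀ A₁ A₂ A₃ B₀ B₁ B₂ B₃ p : ℝ} (hA0 : 0 < A₀)
    (hfut : A₁^2 + A₂^2 + A₃^2 < A₀^2) (hp : p < B₀)
    (hlb1 : A₁ ≠ 0 → p ≤ B₁) (hlb2 : A₂ ≠ 0 → p ≤ B₂) (hlb3 : A₃ ≠ 0 → p ≤ B₃)
    (hreal : (A₁ ≠ 0 ∧ B₁ = p) ∨ (A₂ ≠ 0 ∧ B₂ = p) ∨ (A₃ ≠ 0 ∧ B₃ = p)) :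
    ∃ lam, lam < p ∧ hfun A₀ A₁ A₂ A₃ B₀ B₁ B₂ B₃ lam = 0 := by
  have hcont : ContinuousOn (hfun A₀ A₁ A₂ A₃ B₀ B₁ B₂ B₃) (Iio p) := by
    unfold hfun
    refine (((cont_term ?_).sub (cont_term ?_)).sub (cont_term ?_)).sub (cont_term ?_)
    · exact fun _ l hl => sub_ne_zero.mpr (ne_of_gt (lt_trans hl hp))
    · exact fun hA l hl => sub_ne_zero.mpr (ne_of_gt (lt_of_lt_of_le hl (hlb1 hA)))
    · exact fun hA l hl => sub_ne_zero.mpr (ne_of_gt (lt_of_lt_of_le hl (hlb2 hA)))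
    · exact fun hA l hl => sub_ne_zero.mpr (ne_of_gt (lt_of_lt_of_le hl (hlb3 hA)))
  have ratio : ∀ B : ℝ, Tendsto (fun l => (l/(B-l))^2) atBot (𝓝 1) := by
    intro B
    have h1 : Tendsto (fun l : ℝ => B - l) atBot atTop := by
      simpa [sub_eq_add_neg] using
        tendsto_atTop_add_const_left atBot B
          (tendsto_neg_atBot_atTop : Tendsto (fun x : ℝ => -x) atBot atTop)
    have h2 : Tendsto (fun l : ℝ => B/(B-l)) atBot (𝓝 0) := h1.const_div_atTop B
    have h3 : Tendsto (fun l : ℝ => -1 + B/(B-l)) atBot (𝓝 (-1)) := by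
      simpa using tendsto_const_nhds.add h2
    have h4 : Tendsto (fun l : ℝ => l/(B-l)) atBot (𝓝 (-1)) := by
      refine h3.congr' ?_
      filter_upwards [eventually_lt_atBot B] with l hl
      have hne : B - l ≠ 0 := sub_ne_zero.mpr (ne_of_gt hl)
      field_simp
      ring
    have := h4.pow 2
    simpa using this
  have key : Tendsto (fun l => l^2 * hfun A₀ A₁ A₂ A₃ B₀ B₁ B₂ B₃ l) atBot
      (𝓝 (A₀^2 - A₁^2 - A₂^2 - A₃^2)) := by
    have heq : (fun l => l^2 * hfun A₀ A₁ A₂ A₃ B₀ B₁ B₂ B₃ l) = fun l =>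
        A₀^2 * (l/(B₀-l))^2 - A₁^2 * (l/(B₁-l))^2 - A₂^2 * (l/(B₂-l))^2
          - A₃^2 * (l/(B₃-l))^2 := by
      have e : ∀ A B l : ℝ, l^2 * (A^2/(B-l)^2) = A^2 * (l/(B-l))^2 := by
        intro A B l; rw [div_pow]; ring
      funext l; unfold hfun
      rw [mul_sub, mul_sub, mul_sub, e, e, e, e]
    rw [heq]
    have hkey : Tendsto (fun l : ℝ => A₀^2 * (l/(B₀-l))^2 - A₁^2 * (l/(B₁-l))^2
        - A₂^2 * (l/(B₂-l))^2 - A₃^2 * (l/(B₃-l))^2) atBot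
        (𝓝 (A₀^2*1 - A₁^2*1 - A₂^2*1 - A₃^2*1)) :=
      (((tendsto_const_nhds.mul (ratio B₀)).sub
        (tendsto_const_nhds.mul (ratio B₁))).sub
        (tendsto_const_nhds.mul (ratio B₂))).sub
        (tendsto_const_nhds.mul (ratio B₃))
    simpa using hkey
  have hpos : ∀ᶠ l in atBot, 0 < hfun A₀ A₁ A₂ A₃ B₀ B₁ B₂ B₃ l := by
    have ev1 : ∀ᶠ l in atBot, 0 < l^2 * hfun A₀ A₁ A₂ A₃ B₀ B₁ B₂ B₃ l :=
      key.eventually (eventually_gt_nhds (by linarith))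
    filter_upwards [ev1, eventually_lt_atBot (0:ℝ)] with l e1 e2
    have hl2 : 0 < l^2 := by nlinarith
    nlinarith
  have hbot : Tendsto (hfun A₀ A₁ A₂ A₃ B₀ B₁ B₂ B₃) (𝓝[<] p) atBot :=
    (tendsto_pole (ne_of_gt hp) hreal).mono_left
      (nhdsWithin_mono _ fun x hx => ne_of_lt hx)
  obtain ⟨lam, hlam, h0⟩ := ivt_Iio hcont hpos hbot
  exact ⟨lam, hlam, h0⟩

lemma crit_of_root {A₀ A₁ A₂ A₃ B₀ B₁ B₂ B₃ lam : ℝ} (hA0 : 0 < A₀) (hlam : lam < B₀)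
    (hroot : hfun A₀ A₁ A₂ A₃ B₀ B₁ B₂ B₃ lam = 0)
    (hs1 : A₁ ≠ 0 → B₁ ≠ lam) (hs2 : A₂ ≠ 0 → B₂ ≠ lam) (hs3 : A₃ ≠ 0 → B₃ ≠ lam) :
    IsCritPt A₀ A₁ A₂ A₃ B₀ B₁ B₂ B₃
      ![A₀/(B₀-lam), A₁/(B₁-lam), A₂/(B₂-lam), A₃/(B₃-lam)] := by
  have hB0 : B₀ - lam ≠ 0 := sub_ne_zero.mpr (ne_of_gt hlam)
  have hr0pos : 0 < A₀/(B₀-lam) := div_pos hA0 (by linarith)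
  refine ⟨⟨?_, ?_⟩, ?_, lam, ?_, ?_, ?_, ?_⟩
  · simpa using hr0pos.le
  · show (A₀/(B₀-lam))^2 = (A₁/(B₁-lam))^2 + (A₂/(B₂-lam))^2 + (A₃/(B₃-lam))^2
    have e0 : (A₀/(B₀-lam))^2 = A₀^2/(B₀-lam)^2 := div_pow _ _ _
    have e1 : (A₁/(B₁-lam))^2 = A₁^2/(B₁-lam)^2 := div_pow _ _ _
    have e2 : (A₂/(B₂-lam))^2 = A₂^2/(B₂-lam)^2 := div_pow _ _ _
    have e3 : (A₃/(B₃-lam))^2 = A₃^2/(B₃-lam)^2 := div_pow _ _ _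
    unfold hfun at hroot
    rw [e0, e1, e2, e3]; linarith
  · intro hcontra
    have := congrFun hcontra 0
    simp at this
    rcases this with h | h
    · exact hA0.ne' h
    · exact hB0 h
  · show (B₀ - lam) * (A₀/(B₀-lam)) = A₀
    rw [mul_div_cancel₀ _ hB0]
  · show (B₁ - lam) * (A₁/(B₁-lam)) = A₁
    by_cases hA : A₁ = 0
    · simp [hA]
    · rw [mul_div_cancel₀ _ (sub_ne_zero.mpr (hs1 hA))]
  · show (B₂ - lam) * (A₂/(B₂-lam)) = A₂
    by_cases hA : A₂ = 0
    · simp [hA]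
    · rw [mul_div_cancel₀ _ (sub_ne_zero.mpr (hs2 hA))]
  · show (B₃ - lam) * (A₃/(B₃-lam)) = A₃
    by_cases hA : A₃ = 0
    · simp [hA]
    · rw [mul_div_cancel₀ _ (sub_ne_zero.mpr (hs3 hA))]

lemma max3 {P1 P2 P3 : Prop} {b1 b2 b3 : ℝ} (h : P1 ∨ P2 ∨ P3) :
    ∃ p, (P1 → b1 ≤ p) ∧ (P2 → b2 ≤ p) ∧ (P3 → b3 ≤ p) ∧
      ((P1 ∧ b1 = p) ∨ (P2 ∧ b2 = p) ∨ (P3 ∧ b3 = p)) := by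
  by_cases p1 : P1 <;> by_cases p2 : P2 <;> by_cases p3 : P3
  · refine ⟨max b1 (max b2 b3), fun _ => le_max_left _ _,
      fun _ => le_trans (le_max_left _ _) (le_max_right _ _),
      fun _ => le_trans (le_max_right _ _) (le_max_right _ _), ?_⟩
    rcases le_total (max b2 b3) b1 with h' | h'
    · exact Or.inl ⟨p1, (max_eq_left h').symm⟩
    · rcases le_total b3 b2 with h'' | h''
      · exact Or.inr (Or.inl ⟨p2, by rw [max_eq_right h', max_eq_left h'']⟩)
      · exact Or.inr (Or.inr ⟨p3, by rw [max_eq_right h', max_eq_right h'']⟩)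
  · refine ⟨max b1 b2, fun _ => le_max_left _ _, fun _ => le_max_right _ _,
      fun hp => absurd hp p3, ?_⟩
    rcases le_total b2 b1 with h' | h'
    · exact Or.inl ⟨p1, (max_eq_left h').symm⟩
    · exact Or.inr (Or.inl ⟨p2, (max_eq_right h').symm⟩)
  · refine ⟨max b1 b3, fun _ => le_max_left _ _, fun hp => absurd hp p2,
      fun _ => le_max_right _ _, ?_⟩
    rcases le_total b3 b1 with h' | h'
    · exact Or.inl ⟨p1, (max_eq_left h').symm⟩
    · exact Or.inr (Or.inr ⟨p3, (max_eq_right h').symm⟩)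
  · exact ⟨b1, fun _ => le_refl _, fun hp => absurd hp p2, fun hp => absurd hp p3,
      Or.inl ⟨p1, rfl⟩⟩
  · refine ⟨max b2 b3, fun hp => absurd hp p1, fun _ => le_max_left _ _,
      fun _ => le_max_right _ _, ?_⟩
    rcases le_total b3 b2 with h' | h'
    · exact Or.inr (Or.inl ⟨p2, (max_eq_left h').symm⟩)
    · exact Or.inr (Or.inr ⟨p3, (max_eq_right h').symm⟩)
  · exact ⟨b2, fun hp => absurd hp p1, fun _ => le_refl _, fun hp => absurd hp p3,
      Or.inr (Or.inl ⟨p2, rfl⟩)⟩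
  · exact ⟨b3, fun hp => absurd hp p1, fun hp => absurd hp p2, fun _ => le_refl _,
      Or.inr (Or.inr ⟨p3, rfl⟩)⟩
  · exact absurd h (by tauto)

lemma min3 {P1 P2 P3 : Prop} {b1 b2 b3 : ℝ} (h : P1 ∨ P2 ∨ P3) :
    ∃ p, (P1 → p ≤ b1) ∧ (P2 → p ≤ b2) ∧ (P3 → p ≤ b3) ∧
      ((P1 ∧ b1 = p) ∨ (P2 ∧ b2 = p) ∨ (P3 ∧ b3 = p)) := by
  obtain ⟨p, h1, h2, h3, hr⟩ := max3 (b1 := -b1) (b2 := -b2) (b3 := -b3) h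
  refine ⟨-p, fun hp => by linarith [h1 hp], fun hp => by linarith [h2 hp],
    fun hp => by linarith [h3 hp], ?_⟩
  rcases hr with ⟨hp, he⟩ | ⟨hp, he⟩ | ⟨hp, he⟩
  · exact Or.inl ⟨hp, by linarith⟩
  · exact Or.inr (Or.inl ⟨hp, by linarith⟩)
  · exact Or.inr (Or.inr ⟨hp, by linarith⟩)

/-- If A lies inside the future lightcone, there are at least two distinct
nontrivial critical points on LC⁺. -/
theorem at_least_two_critical_points
    (A₀ A₁ A₂ A₃ B₀ B₁ B₂ B₃ : ℝ)
    (h1 : B₁ < B₀) (h2 : B₂ < B₀) (h3 : B₃ < B₀)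
    (hA0 : 0 < A₀)
    (hAfuture : (A₁) ^ 2 + (A₂) ^ 2 + (A₃) ^ 2 < (A₀) ^ 2) :
    ∃ r s : Fin 4 → ℝ, r ≠ s ∧
      IsCritPt A₀ A₁ A₂ A₃ B₀ B₁ B₂ B₃ r ∧
      IsCritPt A₀ A₁ A₂ A₃ B₀ B₁ B₂ B₃ s := by
  by_cases hz : A₁ = 0 ∧ A₂ = 0 ∧ A₃ = 0
  · obtain ⟨z1, z2, z3⟩ := hz
    have hB : (0:ℝ) < B₀ - B₁ := by linarith
    set c := A₀/(B₀-B₁) with hc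
    have hcpos : 0 < c := div_pos hA0 hB
    refine ⟨![c, c, 0, 0], ![c, -c, 0, 0], ?_, ?_, ?_⟩
    · intro hcontra
      have := congrFun hcontra 1
      simp at this
      linarith
    · refine ⟨⟨by simpa using hcpos.le, by simp⟩, ?_, B₁, ?_, ?_, ?_, ?_⟩
      · intro hcontra
        have := congrFun hcontra 0
        simp at this
        rw [this] at hcpos; exact lt_irrefl 0 hcpos
      · show (B₀ - B₁) * c = A₀
        rw [hc, mul_div_cancel₀ _ (ne_of_gt hB)]
      · simpa using z1.symm
      · simpa using z2.symm
      · simpa using z3.symm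
    · refine ⟨⟨by simpa using hcpos.le, by simp⟩, ?_, B₁, ?_, ?_, ?_, ?_⟩
      · intro hcontra
        have := congrFun hcontra 0
        simp at this
        rw [this] at hcpos; exact lt_irrefl 0 hcpos
      · show (B₀ - B₁) * c = A₀
        rw [hc, mul_div_cancel₀ _ (ne_of_gt hB)]
      · show (B₁ - B₁) * (-c) = A₁
        rw [z1]; ring
      · simpa using z2.symm
      · simpa using z3.symm
  · have hor : A₁ ≠ 0 ∨ A₂ ≠ 0 ∨ A₃ ≠ 0 := by tauto
    obtain ⟨pmax, hub1, hub2, hub3, hrealmax⟩ := max3 (b1 := B₁) (b2 := B₂) (b3 := B₃) hor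
    obtain ⟨pmin, hlb1, hlb2, hlb3, hrealmin⟩ := min3 (b1 := B₁) (b2 := B₂) (b3 := B₃) hor
    have hpmaxB0 : pmax < B₀ := by
      rcases hrealmax with ⟨_, he⟩ | ⟨_, he⟩ | ⟨_, he⟩ <;> linarith
    have hminmax : pmin ≤ pmax := by
      rcases hrealmin with ⟨hp, he⟩ | ⟨hp, he⟩ | ⟨hp, he⟩
      · linarith [hub1 hp]
      · linarith [hub2 hp]
      · linarith [hub3 hp]
    have hpminB0 : pmin < B₀ := lt_of_le_of_lt hminmax hpmaxB0
    obtain ⟨lam₁, hl1a, hl1b, hroot1⟩ :=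
      upper_root hA0 h1 h2 h3 hpmaxB0 hub1 hub2 hub3 hrealmax
    obtain ⟨lam₂, hl2a, hroot2⟩ :=
      lower_root hA0 (by linarith) hpminB0 hlb1 hlb2 hlb3 hrealmin
    have hl2B0 : lam₂ < B₀ := by linarith
    have crit1 := crit_of_root hA0 hl1b hroot1
      (fun hA => ne_of_lt (lt_of_le_of_lt (hub1 hA) hl1a))
      (fun hA => ne_of_lt (lt_of_le_of_lt (hub2 hA) hl1a))
      (fun hA => ne_of_lt (lt_of_le_of_lt (hub3 hA) hl1a))
    have crit2 := crit_of_root hA0 hl2B0 hroot2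
      (fun hA => ne_of_gt (lt_of_lt_of_le hl2a (hlb1 hA)))
      (fun hA => ne_of_gt (lt_of_lt_of_le hl2a (hlb2 hA)))
      (fun hA => ne_of_gt (lt_of_lt_of_le hl2a (hlb3 hA)))
    refine ⟨_, _, ?_, crit1, crit2⟩
    intro hcontra
    have heq := congrFun hcontra 0
    simp only [Matrix.cons_val_zero] at heq
    have hlt : A₀/(B₀-lam₁) > A₀/(B₀-lam₂) := by
      apply div_lt_div_of_pos_left hA0 (by linarith)
      linarith
    rw [heq] at hlt
    exact lt_irrefl _ hlt
end

section
/- Let b be a real symmetric 3×3 matrix and a ∈ ℝ³. Then the determinant of the 3×3 matrix whose columns are a, b·a, and b²·a equals zero if and only if there exists a nonzero vector v ∈ ℝ³ and μ ∈ ℝ with b·v = μ·v and a·v = 0 (i.e., a is orthogonal to some eigenvector of b). -/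
open Matrix

/-- The determinant of the 3×3 matrix with columns a, b·a, b²·a vanishes iff
a is orthogonal to some eigenvector of the real symmetric matrix b. -/
theorem det_columns_zero_iff_orthogonal_eigenvector
    (b : Matrix (Fin 3) (Fin 3) ℝ) (hb : b.IsSymm) (a : Fin 3 → ℝ) :
    (Matrix.of fun i j => ![a, b.mulVec a, (b * b).mulVec a] j i).det = 0 ↔
      ∃ v : Fin 3 → ℝ, v ≠ 0 ∧ ∃ μ : ℝ, b.mulVec v = μ • v ∧ a ⬝ᵥ v = 0 := by
  have hA : b.IsHermitian := by rwa [Matrix.IsHermitian, conjTranspose_eq_transpose_of_trivial]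
  set M : Matrix (Fin 3) (Fin 3) ℝ :=
    Matrix.of (fun i j => ![a, b.mulVec a, (b * b).mulVec a] j i) with hM
  have hbt : ∀ y : Fin 3 → ℝ, y ᵥ* b = b *ᵥ y := by
    intro y; rw [← vecMul_transpose, hb.eq]
  have hdot : ∀ x y : Fin 3 → ℝ, (b *ᵥ x) ⬝ᵥ y = x ⬝ᵥ (b *ᵥ y) := by
    intro x y
    rw [dotProduct_comm, dotProduct_mulVec, hbt, dotProduct_comm]
  constructor
  · intro hdet
    by_contra hcon
    push_neg at hcon
    set V : Fin 3 → (Fin 3 → ℝ) := fun i => hA.eigenvectorBasis i with hV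
    set μ : Fin 3 → ℝ := hA.eigenvalues with hμdef
    have hBV : ∀ i, b *ᵥ V i = μ i • V i := fun i => hA.mulVec_eigenvectorBasis i
    have hVV : ∀ i j, V i ⬝ᵥ V j = if i = j then 1 else 0 := by
      intro i j
      have h := (orthonormal_iff_ite.mp hA.eigenvectorBasis.orthonormal) i j
      rw [EuclideanSpace.inner_eq_star_dotProduct, star_trivial, dotProduct_comm] at h
      exact h
    set c : Fin 3 → ℝ := fun i => a ⬝ᵥ V i with hc'
    have hcV : ∀ i, a ⬝ᵥ V i = c i := fun i => rfl
    have key : ∀ k, (b *ᵥ a) ⬝ᵥ V k = μ k * c k := by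
      intro k
      rw [hdot, hBV k, dotProduct_smul, smul_eq_mul, hcV]
    have key2 : ∀ k, ((b * b) *ᵥ a) ⬝ᵥ V k = μ k * (μ k * c k) := by
      intro k
      rw [← mulVec_mulVec, hdot, hdot, hBV k, mulVec_smul, hBV k, dotProduct_smul,
        dotProduct_smul, smul_eq_mul, smul_eq_mul, hcV]
    have hVne : ∀ i, V i ≠ 0 := by
      intro i h0
      have := hVV i i
      rw [h0] at this
      simp at this
    have hc : ∀ i, c i ≠ 0 := fun i => hcon (V i) (hVne i) (μ i) (hBV i)
    have hμinj : Function.Injective μ := by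
      intro i j hij
      by_contra hne
      set v : Fin 3 → ℝ := c j • V i - c i • V j with hv
      have hbv : b *ᵥ v = μ i • v := by
        rw [hv, mulVec_sub, mulVec_smul, mulVec_smul, hBV, hBV, ← hij, smul_sub,
          smul_comm (μ i) (c j), smul_comm (μ i) (c i)]
      have hav : a ⬝ᵥ v = 0 := by
        rw [hv, dotProduct_sub, dotProduct_smul, dotProduct_smul, hcV, hcV,
          smul_eq_mul, smul_eq_mul, mul_comm, sub_self]
      have hvne : v ≠ 0 := by
        intro h0
        have hvj : v ⬝ᵥ V j = 0 := by rw [h0, zero_dotProduct]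
        rw [hv, sub_dotProduct, smul_dotProduct, smul_dotProduct, hVV, hVV,
          if_neg hne, if_pos rfl] at hvj
        simp at hvj
        exact hc i hvj
      exact hcon v hvne (μ i) hbv hav
    obtain ⟨w, hw0, hw⟩ := (Matrix.exists_mulVec_eq_zero_iff).2 hdet
    have heq : ∀ k, (w 0 + w 1 * μ k + w 2 * μ k ^ 2) * c k = 0 := by
      intro k
      have h1 : (M *ᵥ w) ⬝ᵥ V k = 0 := by rw [hw, zero_dotProduct]
      have h2 : M *ᵥ w = w 0 • a + w 1 • (b *ᵥ a) + w 2 • ((b * b) *ᵥ a) := by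
        funext i
        simp [hM, Matrix.mulVec, dotProduct, Fin.sum_univ_three]
        ring
      rw [h2, add_dotProduct, add_dotProduct, smul_dotProduct, smul_dotProduct,
        smul_dotProduct, key, key2, hcV] at h1
      simp only [smul_eq_mul] at h1
      linear_combination h1
    have heq' : ∀ k, w 0 + w 1 * μ k + w 2 * μ k ^ 2 = 0 := by
      intro k
      rcases mul_eq_zero.mp (heq k) with h | h
      · exact h
      · exact absurd h (hc k)
    have h01 : μ 0 ≠ μ 1 := fun h => by simpa using hμinj h
    have h02 : μ 0 ≠ μ 2 := fun h => by simpa using hμinj h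
    have h12 : μ 1 ≠ μ 2 := fun h => by simpa using hμinj h
    have e0 := heq' 0; have e1 := heq' 1; have e2 := heq' 2
    have hw2 : w 2 = 0 := by
      have h : w 2 * ((μ 0 - μ 1) * (μ 0 - μ 2) * (μ 1 - μ 2)) = 0 := by
        linear_combination (μ 1 - μ 2) * e0 - (μ 0 - μ 2) * e1 + (μ 0 - μ 1) * e2
      rcases mul_eq_zero.mp h with h | h
      · exact h
      · exact absurd h (by
          simp only [mul_eq_zero, sub_eq_zero, not_or]
          exact ⟨⟨h01, h02⟩, h12⟩)
    have hw1 : w 1 = 0 := by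
      have h : w 1 * (μ 0 - μ 1) = 0 := by
        linear_combination e0 - e1 + (μ 1 ^ 2 - μ 0 ^ 2) * hw2
      rcases mul_eq_zero.mp h with h | h
      · exact h
      · exact absurd (sub_eq_zero.mp h) h01
    have hw0' : w 0 = 0 := by linear_combination e0 - μ 0 * hw1 - μ 0 ^ 2 * hw2
    apply hw0
    funext i
    fin_cases i <;> assumption
  · rintro ⟨v, hv, μ₀, hbv, hav⟩
    rw [← Matrix.det_transpose, ← Matrix.exists_mulVec_eq_zero_iff]
    refine ⟨v, hv, ?_⟩
    have h1 : (b *ᵥ a) ⬝ᵥ v = 0 := by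
      rw [hdot, hbv, dotProduct_smul, smul_eq_mul, hav, mul_zero]
    have h2 : ((b * b) *ᵥ a) ⬝ᵥ v = 0 := by
      rw [← mulVec_mulVec, hdot, hdot, hbv, mulVec_smul, hbv, dotProduct_smul,
        dotProduct_smul, smul_eq_mul, smul_eq_mul, hav]
      ring
    have hrow : ∀ i, (Mᵀ *ᵥ v) i = ![a, b *ᵥ a, (b * b) *ᵥ a] i ⬝ᵥ v := fun i => rfl
    funext i
    rw [hrow i]
    fin_cases i
    · exact hav
    · exact h1
    · exact h2
end

section
/- Suppose Q(r) > 0 for every nonzero r ∈ LC⁺, and let A, K ∈ ℝ⁴ with K inside the future lightcone (K₀ > 0 and ⟨K, K⟩ > 0). Then the following are equivalent: (i) there exists a real 4×4 matrix Λ, not equal to the identity, with Λᵀ η Λ = η, Λ₀₀ > 0 (orthochronous), Λᵀ B Λ = B, Λᵀ η A = η A, and Λᵀ η K = η K (a nontrivial explicit symmetry of the free energy); (ii) there exists a nonzero v ∈ ℝ⁴ and μ ∈ ℝ with B v = μ η v, ⟨A, v⟩ = 0, and ⟨K, v⟩ = 0 (an eigenvector of B Minkowski-orthogonal to both A and K).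 -/
open Matrix

lemma eta_transpose : etaᵀ = eta := by rw [eta, Matrix.diagonal_transpose]

lemma minkDot_eq (x y : Fin 4 → ℝ) : minkDot x y = x ⬝ᵥ eta *ᵥ y := by
  simp [minkDot, dotProduct, Fin.sum_univ_four, eta, Matrix.mulVec_diagonal]
  ring

lemma minkDot_eq' (x y : Fin 4 → ℝ) : minkDot x y = eta *ᵥ x ⬝ᵥ y := by
  simp [minkDot, dotProduct, Fin.sum_univ_four, eta, Matrix.mulVec_diagonal]
  ring

lemma minkDot_comm (x y : Fin 4 → ℝ) : minkDot x y = minkDot y x := by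
  simp [minkDot]; ring

lemma spacelike {K v : Fin 4 → ℝ} (hK0 : 0 < K 0) (hKt : 0 < minkDot K K)
    (horth : minkDot K v = 0) (hv : v ≠ 0) : minkDot v v < 0 := by
  simp only [minkDot] at *
  have horth' : K 0 * v 0 = K 1 * v 1 + K 2 * v 2 + K 3 * v 3 := by linarith
  by_cases hs : v 1 ^ 2 + v 2 ^ 2 + v 3 ^ 2 = 0
  · exfalso
    have h1 : v 1 = 0 := by nlinarith [sq_nonneg (v 1), sq_nonneg (v 2), sq_nonneg (v 3)]
    have h2 : v 2 = 0 := by nlinarith [sq_nonneg (v 1), sq_nonneg (v 2), sq_nonneg (v 3)]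
    have h3 : v 3 = 0 := by nlinarith [sq_nonneg (v 1), sq_nonneg (v 2), sq_nonneg (v 3)]
    have h0 : v 0 = 0 := by
      have : K 0 * v 0 = 0 := by rw [horth', h1, h2, h3]; ring
      exact (mul_eq_zero.mp this).resolve_left (ne_of_gt hK0)
    exact hv (funext fun i => by fin_cases i <;> assumption)
  · have hs' : 0 < v 1 ^ 2 + v 2 ^ 2 + v 3 ^ 2 :=
      lt_of_le_of_ne (by positivity) (Ne.symm hs)
    have hcs : (K 1 * v 1 + K 2 * v 2 + K 3 * v 3) ^ 2 ≤
        (K 1 ^ 2 + K 2 ^ 2 + K 3 ^ 2) * (v 1 ^ 2 + v 2 ^ 2 + v 3 ^ 2) := by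
      nlinarith [sq_nonneg (K 1 * v 2 - K 2 * v 1), sq_nonneg (K 1 * v 3 - K 3 * v 1),
        sq_nonneg (K 2 * v 3 - K 3 * v 2)]
    have hlt : (K 1 ^ 2 + K 2 ^ 2 + K 3 ^ 2) * (v 1 ^ 2 + v 2 ^ 2 + v 3 ^ 2) <
        K 0 ^ 2 * (v 1 ^ 2 + v 2 ^ 2 + v 3 ^ 2) := by nlinarith
    have hK0v0 : K 0 ^ 2 * (v 0 * v 0) = (K 1 * v 1 + K 2 * v 2 + K 3 * v 3) ^ 2 := by
      rw [← horth']; ring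
    nlinarith [mul_pos hK0 hK0, sq_nonneg (K 0)]

lemma vecMulVec_transpose' (a b : Fin 4 → ℝ) : (vecMulVec a b)ᵀ = vecMulVec b a := by
  ext i j; simp [vecMulVec_apply, mul_comm]

lemma mul_vecMulVec' (M : Matrix (Fin 4) (Fin 4) ℝ) (a b : Fin 4 → ℝ) :
    M * vecMulVec a b = vecMulVec (M *ᵥ a) b := by
  ext i j
  simp [Matrix.mul_apply, vecMulVec_apply, Matrix.mulVec, dotProduct,
    Finset.sum_mul, mul_assoc]

lemma vecMulVec_mul' (a b : Fin 4 → ℝ) (M : Matrix (Fin 4) (Fin 4) ℝ) :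
    vecMulVec a b * M = vecMulVec a (b ᵥ* M) := by
  ext i j
  simp [Matrix.mul_apply, vecMulVec_apply, Matrix.vecMul, dotProduct,
    Finset.mul_sum, mul_assoc]

lemma vecMulVec_mul_vecMulVec' (a b c d : Fin 4 → ℝ) :
    vecMulVec a b * vecMulVec c d = (b ⬝ᵥ c) • vecMulVec a d := by
  ext i j
  simp [Matrix.mul_apply, vecMulVec_apply, dotProduct, Finset.sum_mul, Finset.mul_sum]
  rw [Fin.sum_univ_four, Fin.sum_univ_four]
  ring

lemma vecMulVec_mulVec' (a b x : Fin 4 → ℝ) :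
    vecMulVec a b *ᵥ x = (b ⬝ᵥ x) • a := by
  ext i
  simp [Matrix.mulVec, vecMulVec_apply, dotProduct, Finset.sum_mul, Finset.mul_sum]
  rw [Fin.sum_univ_four, Fin.sum_univ_four]
  ring

lemma vecMulVec_smul_right (a b : Fin 4 → ℝ) (s : ℝ) :
    vecMulVec a (s • b) = s • vecMulVec a b := by
  ext i j; simp [vecMulVec_apply]; ring

lemma vecMulVec_smul_left (a b : Fin 4 → ℝ) (s : ℝ) :
    vecMulVec (s • a) b = s • vecMulVec a b := by
  ext i j; simp [vecMulVec_apply]; ring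


lemma aux_exists_eigenvector {V : Type} [AddCommGroup V] [Module ℝ V]
    [FiniteDimensional ℝ V] [Nontrivial V]
    (f : V →ₗ[ℝ] V) (ip : V → V → ℝ)
    (symm : ∀ x y, ip x y = ip y x)
    (addl : ∀ x y z, ip (x + y) z = ip x z + ip y z)
    (smull : ∀ (r : ℝ) (x y : V), ip (r • x) y = r * ip x y)
    (posdef : ∀ x, x ≠ 0 → 0 < ip x x)
    (hsym : ∀ x y, ip (f x) y = ip x (f y)) :
    ∃ (w : V) (μ : ℝ), w ≠ 0 ∧ f w = μ • w := by
  have ip_zero : ∀ y, ip 0 y = 0 := by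
    intro y
    have := smull 0 0 y
    simpa using this
  letI core : InnerProductSpace.Core ℝ V :=
    { inner := fun x y => ip x y
      conj_inner_symm := fun x y => by
        simp only [starRingEnd_apply, star_trivial]
        exact symm y x
      re_inner_nonneg := fun x => by
        rcases eq_or_ne x 0 with h | h
        · simp [h, ip_zero]
        · simpa using (posdef x h).le
      add_left := fun x y z => addl x y z
      smul_left := fun x y r => by
        simpa using smull r x y
      definite := fun x hx => by
        by_contra h
        exact absurd hx (ne_of_gt (posdef x h)) }
  letI : NormedAddCommGroup V := core.toNormedAddCommGroup
  letI : InnerProductSpace ℝ V := InnerProductSpace.ofCore core.toCore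
  have hf : f.IsSymmetric := by
    intro x y
    exact hsym x y
  obtain ⟨w, hw⟩ := hf.hasEigenvalue_iSup_of_finiteDimensional.exists_hasEigenvector
  exact ⟨w, _, hw.2, hw.apply_eq_smul⟩

/-- The free energy has a nontrivial explicit symmetry iff some Minkowski
eigenvector of B is Minkowski-orthogonal to both A and K. -/
theorem explicit_symmetry_iff_orthogonal_eigenvector
    (B : Matrix (Fin 4) (Fin 4) ℝ) (hB : B.IsSymm)
    (hpos : ∀ r ∈ LCplus, r ≠ 0 → 0 < Q B r)
    (A K : Fin 4 → ℝ)
    (hK0 : 0 < K 0) (hKt : 0 < minkDot K K) :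
    (∃ Λ : Matrix (Fin 4) (Fin 4) ℝ, Λ ≠ 1 ∧
        Λᵀ * eta * Λ = eta ∧ 0 < Λ 0 0 ∧
        Λᵀ * B * Λ = B ∧
        Λᵀ.mulVec (eta.mulVec A) = eta.mulVec A ∧
        Λᵀ.mulVec (eta.mulVec K) = eta.mulVec K) ↔
    (∃ v : Fin 4 → ℝ, v ≠ 0 ∧ ∃ μ : ℝ,
        B.mulVec v = μ • eta.mulVec v ∧ minkDot A v = 0 ∧ minkDot K v = 0) := by
  constructor
  · rintro ⟨Λ, hne, hLor, h00, hBinv, hA, hK⟩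
    have hinv1 : (eta * Λᵀ * eta) * Λ = 1 := by
      calc (eta * Λᵀ * eta) * Λ = eta * (Λᵀ * eta * Λ) := by
            simp only [Matrix.mul_assoc]
        _ = 1 := by rw [hLor, eta_mul_eta]
    have hinv2 : Λ * (eta * Λᵀ * eta) = 1 := mul_eq_one_comm.mp hinv1
    have hLeta : Λ * eta * Λᵀ = eta := by
      calc Λ * eta * Λᵀ = Λ * (eta * Λᵀ * eta) * eta := by
            simp only [Matrix.mul_assoc, eta_mul_eta, Matrix.mul_one]
        _ = eta := by rw [hinv2, Matrix.one_mul]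
    set C : Matrix (Fin 4) (Fin 4) ℝ := eta * B with hC
    have hcomm : C * Λ = Λ * C := by
      have h1 : Λ * C = Λ * (eta * (Λᵀ * B * Λ)) := by rw [hBinv]
      have h2 : Λ * (eta * (Λᵀ * B * Λ)) = (Λ * eta * Λᵀ) * (B * Λ) := by
        simp only [Matrix.mul_assoc]
      rw [h1, h2, hLeta, hC]
      simp only [Matrix.mul_assoc]
    set N : Matrix (Fin 4) (Fin 4) ℝ := Λ - 1 with hN
    have hNmulVec : ∀ x, N *ᵥ x = Λ *ᵥ x - x := by
      intro x; rw [hN, Matrix.sub_mulVec, Matrix.one_mulVec]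
    set U : Submodule ℝ (Fin 4 → ℝ) := LinearMap.range N.mulVecLin with hU
    have hUA : ∀ u ∈ U, minkDot A u = 0 := by
      rintro u ⟨x, rfl⟩
      rw [Matrix.mulVecLin_apply, hNmulVec]
      rw [minkDot_eq', dotProduct_sub, Matrix.dotProduct_mulVec,
        ← Matrix.mulVec_transpose, hA, sub_self]
    have hUK : ∀ u ∈ U, minkDot K u = 0 := by
      rintro u ⟨x, rfl⟩
      rw [Matrix.mulVecLin_apply, hNmulVec]
      rw [minkDot_eq', dotProduct_sub, Matrix.dotProduct_mulVec,
        ← Matrix.mulVec_transpose, hK, sub_self]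
    have hNC : N * C = C * N := by
      rw [hN, Matrix.sub_mul, Matrix.mul_sub, Matrix.one_mul, Matrix.mul_one, hcomm]
    have hUC : ∀ u ∈ U, C *ᵥ u ∈ U := by
      rintro u ⟨x, rfl⟩
      refine ⟨C *ᵥ x, ?_⟩
      simp only [Matrix.mulVecLin_apply, Matrix.mulVec_mulVec]
      rw [hNC]
    have hNex : ∃ x, N *ᵥ x ≠ 0 := by
      by_contra h
      push_neg at h
      apply hne
      have hN0 : N = 0 := by
        ext i j
        have := congrFun (h (Pi.single j 1)) i
        simpa using this
      rw [hN, sub_eq_zero] at hN0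
      exact hN0
    obtain ⟨x₀, hx₀⟩ := hNex
    letI : Nontrivial ↥U :=
      ⟨⟨⟨N *ᵥ x₀, ⟨x₀, by simp⟩⟩, 0,
        fun h => hx₀ (by simpa using congrArg Subtype.val h)⟩⟩
    have hdefpos : ∀ u : ↥U, u ≠ 0 → 0 < -minkDot (u : Fin 4 → ℝ) ↑u := by
      intro u hu
      have hu' : (u : Fin 4 → ℝ) ≠ 0 := fun h0 => hu (Subtype.ext h0)
      have := spacelike hK0 hKt (hUK ↑u u.2) hu'
      linarith
    have hUC' : ∀ x ∈ U, C.mulVecLin x ∈ U := fun x hx => by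
      simpa using hUC x hx
    set T : ↥U →ₗ[ℝ] ↥U := (C.mulVecLin).restrict hUC' with hT
    have hTapp : ∀ u : ↥U, (T u : Fin 4 → ℝ) = C *ᵥ ↑u := fun u => rfl
    have hCsym : ∀ a b : Fin 4 → ℝ, minkDot (C *ᵥ a) b = minkDot a (C *ᵥ b) := by
      intro a b
      rw [minkDot_eq', minkDot_eq]
      simp only [Matrix.mulVec_mulVec, ← Matrix.mul_assoc, hC]
      rw [eta_mul_eta, Matrix.one_mul]
      rw [Matrix.dotProduct_mulVec, ← Matrix.mulVec_transpose, hB]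
    obtain ⟨w, μ, hw0, hweig⟩ :=
      aux_exists_eigenvector T (fun u w => -minkDot (u : Fin 4 → ℝ) ↑w)
        (fun x y => by
          show -minkDot (x : Fin 4 → ℝ) ↑y = -minkDot (y : Fin 4 → ℝ) ↑x
          rw [minkDot_comm])
        (fun x y z => by
          simp only [Submodule.coe_add]
          simp [minkDot]; ring)
        (fun r x y => by
          simp only [Submodule.coe_smul]
          simp [minkDot]; ring)
        hdefpos
        (fun x y => by
          show -minkDot ((T x : ↥U) : Fin 4 → ℝ) ↑y = -minkDot (x : Fin 4 → ℝ) ↑(T y)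
          rw [hTapp, hTapp, hCsym])
    have h1 : C *ᵥ (w : Fin 4 → ℝ) = μ • (w : Fin 4 → ℝ) := by
      rw [← hTapp, hweig]
      rfl
    refine ⟨(w : Fin 4 → ℝ), fun h => hw0 (Subtype.ext h), μ, ?_, hUA ↑w w.2, hUK ↑w w.2⟩
    calc B *ᵥ (w : Fin 4 → ℝ) = (eta * C) *ᵥ (w : Fin 4 → ℝ) := by
          rw [hC, ← Matrix.mul_assoc, eta_mul_eta, Matrix.one_mul]
      _ = eta *ᵥ (C *ᵥ (w : Fin 4 → ℝ)) := by rw [Matrix.mulVec_mulVec]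
      _ = eta *ᵥ (μ • (w : Fin 4 → ℝ)) := by rw [h1]
      _ = μ • (eta *ᵥ (w : Fin 4 → ℝ)) := by rw [Matrix.mulVec_smul]
  · rintro ⟨v, hv, μ, hBv, hAv, hKv⟩
    have hq : minkDot v v < 0 := spacelike hK0 hKt hKv hv
    have hqne : minkDot v v ≠ 0 := ne_of_lt hq
    set q : ℝ := minkDot v v with hqdef
    set c : ℝ := 2 / q with hcdef
    set P : Matrix (Fin 4) (Fin 4) ℝ := vecMulVec v (eta *ᵥ v) with hP
    set W : Matrix (Fin 4) (Fin 4) ℝ := vecMulVec (eta *ᵥ v) (eta *ᵥ v) with hW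
    have hdot : (eta *ᵥ v) ⬝ᵥ v = q := (minkDot_eq' v v).symm
    have hdot2 : v ⬝ᵥ (eta *ᵥ v) = q := (minkDot_eq v v).symm
    have hPT : Pᵀ = vecMulVec (eta *ᵥ v) v := by rw [hP, vecMulVec_transpose']
    have hvecMulEta : v ᵥ* eta = eta *ᵥ v := by
      conv_rhs => rw [← eta_transpose]
      rw [Matrix.mulVec_transpose]
    have hPeta : Pᵀ * eta = W := by
      rw [hPT, vecMulVec_mul', hvecMulEta, hW]
    have hetaP : eta * P = W := by rw [hP, mul_vecMulVec', hW]
    have hWP : W * P = q • W := by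
      rw [hW, hP, vecMulVec_mul_vecMulVec', hdot]
    have hBv' : v ᵥ* B = μ • (eta *ᵥ v) := by
      rw [← Matrix.mulVec_transpose, hB, hBv]
    have hPB : Pᵀ * B = μ • W := by
      rw [hPT, vecMulVec_mul', hBv', vecMulVec_smul_right, hW]
    have hBP : B * P = μ • W := by
      rw [hP, mul_vecMulVec', hBv, vecMulVec_smul_left, hW]
    have hcq : c * q = 2 := by rw [hcdef]; field_simp
    have hTtrans : (1 - c • P)ᵀ = 1 - c • Pᵀ := by
      rw [Matrix.transpose_sub, Matrix.transpose_one, Matrix.transpose_smul]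
    have expand : ∀ (M : Matrix (Fin 4) (Fin 4) ℝ) (s : ℝ),
        Pᵀ * M = s • W → M * P = s • W →
        (1 - c • P)ᵀ * M * (1 - c • P) = M := by
      intro M s h1 h2
      rw [hTtrans]
      have hPMP : Pᵀ * M * P = (s * q) • W := by
        rw [h1, Matrix.smul_mul, hWP, smul_smul]
      calc (1 - c • Pᵀ) * M * (1 - c • P)
          = M - c • (Pᵀ * M) - c • (M * P) + (c * c) • (Pᵀ * M * P) := by
            simp only [Matrix.sub_mul, Matrix.mul_sub, Matrix.one_mul, Matrix.mul_one,
              Matrix.smul_mul, Matrix.mul_smul, smul_smul, smul_sub, smul_add]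
            abel
        _ = M := by
            simp only [h1, h2, Matrix.smul_mul, hWP, smul_smul]
            have hcs : c * c * (s * q) = c * s + c * s := by
              have h' : c * c * (s * q) = (c * q) * (c * s) := by ring
              rw [h', hcq]; ring
            rw [hcs, add_smul]
            abel
    refine ⟨1 - c • P, ?_, ?_, ?_, ?_, ?_, ?_⟩
    · intro h
      have h0 : (1 - c • P) *ᵥ v = v := by rw [h, Matrix.one_mulVec]
      rw [Matrix.sub_mulVec, Matrix.one_mulVec, Matrix.smul_mulVec, hP,
        vecMulVec_mulVec', hdot, smul_smul, hcq] at h0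
      have h2 : (2 : ℝ) • v = 0 := by
        have := sub_eq_self.mp h0
        exact this
      apply hv
      have := smul_eq_zero.mp h2
      rcases this with h' | h'
      · norm_num at h'
      · exact h'
    · exact expand eta 1 (by rw [hPeta, one_smul]) (by rw [hetaP, one_smul])
    · have hetav0 : (eta *ᵥ v) 0 = v 0 := by
        simp [eta, Matrix.mulVec_diagonal]
      have hentry : (1 - c • P) 0 0 = 1 - c * (v 0 * v 0) := by
        simp [Matrix.sub_apply, Matrix.smul_apply, Matrix.one_apply, hP,
          vecMulVec_apply, hetav0]
      rw [hentry]
      have hcneg : c < 0 := div_neg_of_pos_of_neg two_pos hq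
      nlinarith [mul_self_nonneg (v 0),
        mul_nonpos_of_nonpos_of_nonneg hcneg.le (mul_self_nonneg (v 0))]
    · exact expand B μ hPB hBP
    · rw [hTtrans, Matrix.sub_mulVec, Matrix.one_mulVec, Matrix.smul_mulVec,
        hPT, vecMulVec_mulVec']
      have hzero : v ⬝ᵥ (eta *ᵥ A) = 0 := by
        rw [← minkDot_eq, minkDot_comm, hAv]
      rw [hzero, zero_smul, smul_zero, sub_zero]
    · rw [hTtrans, Matrix.sub_mulVec, Matrix.one_mulVec, Matrix.smul_mulVec,
        hPT, vecMulVec_mulVec']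
      have hzero : v ⬝ᵥ (eta *ᵥ K) = 0 := by
        rw [← minkDot_eq, minkDot_comm, hKv]
      rw [hzero, zero_smul, smul_zero, sub_zero]
end
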